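/- arXiv:2009.03609 — 8 statements merged into one kernel-verified Lean document; each statement's English description precedes it below -/
import Mathlib

section
/- For positive integers b1, b2 and a positive integer d, and integers m, n not both zero, d divides gcd_b(m,n) if and only if d^{b1} divides m and d^{b2} divides n, where gcd_b(m,n) is the largest positive integer d such that d^{b1} | m and d^{b2} | n. -/
/-!
The admissible `d` form a set that is bounded (by `|m| + |n|`) and closed under `lcm`, because
`lcm a b ^ k = lcm (a ^ k) (b ^ k)`. Its maximum `g` therefore absorbs every admissible `d`:
`lcm d g` is admissible, so `lcm d g ≤ g`, forcing `lcm d g = g`.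
-/

/-- Generalized gcd: the largest positive integer `d` with `d^b1 ∣ m` and `d^b2 ∣ n`. -/
noncomputable def gcdb (b1 b2 : ℕ) (m n : ℤ) : ℕ :=
  sSup {d : ℕ | 0 < d ∧ (d : ℤ) ^ b1 ∣ m ∧ (d : ℤ) ^ b2 ∣ n}

theorem Nat.dvd_sSup_of_forall_lcm_mem {S : Set ℕ} (hS : BddAbove S) (h0 : 0 ∉ S)
    (hlcm : ∀ a ∈ S, ∀ b ∈ S, a.lcm b ∈ S) {d : ℕ} (hd : d ∈ S) : d ∣ sSup S := by
  have hmax : sSup S ∈ S := Nat.sSup_mem ⟨d, hd⟩ hS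
  have hmem : d.lcm (sSup S) ∈ S := hlcm d hd _ hmax
  have hpos : 0 < d.lcm (sSup S) := Nat.pos_of_ne_zero fun h => h0 (h ▸ hmem)
  have heq : d.lcm (sSup S) = sSup S :=
    le_antisymm (le_csSup hS hmem) (Nat.le_of_dvd hpos (Nat.dvd_lcm_right _ _))
  exact heq ▸ Nat.dvd_lcm_left _ _

theorem Int.natCast_lcm_pow_dvd {a b k : ℕ} {m : ℤ} (ha : (a : ℤ) ^ k ∣ m)
    (hb : (b : ℤ) ^ k ∣ m) : ((a.lcm b : ℕ) : ℤ) ^ k ∣ m := by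
  rw [← Nat.cast_pow, ← Nat.pow_lcm_pow, Int.natCast_dvd]
  rw [← Nat.cast_pow, Int.natCast_dvd] at ha hb
  exact Nat.lcm_dvd ha hb

theorem Int.le_natAbs_of_pow_dvd {d b : ℕ} {m : ℤ} (hb : b ≠ 0) (hm : m ≠ 0)
    (h : (d : ℤ) ^ b ∣ m) : d ≤ m.natAbs := by
  rw [← Nat.cast_pow, Int.natCast_dvd] at h
  exact (Nat.le_self_pow hb d).trans (Nat.le_of_dvd (Int.natAbs_pos.2 hm) h)

theorem bddAbove_pow_dvd_and_pow_dvd {b1 b2 : ℕ} (hb1 : b1 ≠ 0) (hb2 : b2 ≠ 0) {m n : ℤ}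
    (hmn : m ≠ 0 ∨ n ≠ 0) : BddAbove {d : ℕ | 0 < d ∧ (d : ℤ) ^ b1 ∣ m ∧ (d : ℤ) ^ b2 ∣ n} := by
  refine ⟨m.natAbs + n.natAbs, fun d ⟨_, hdm, hdn⟩ => ?_⟩
  rcases hmn with hm | hn
  · exact (Int.le_natAbs_of_pow_dvd hb1 hm hdm).trans (Nat.le_add_right _ _)
  · exact (Int.le_natAbs_of_pow_dvd hb2 hn hdn).trans (Nat.le_add_left _ _)

theorem stmt_0 (b1 b2 : ℕ) (hb1 : 0 < b1) (hb2 : 0 < b2) (d : ℕ) (hd : 0 < d)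
    (m n : ℤ) (hmn : m ≠ 0 ∨ n ≠ 0) :
    d ∣ gcdb b1 b2 m n ↔ ((d : ℤ) ^ b1 ∣ m ∧ (d : ℤ) ^ b2 ∣ n) := by
  have hS := bddAbove_pow_dvd_and_pow_dvd hb1.ne' hb2.ne' hmn
  constructor
  · intro hdg
    obtain ⟨-, hgm, hgn⟩ := Nat.sSup_mem (by exact ⟨1, one_pos, by simp, by simp⟩) hS
    have hdg : (d : ℤ) ∣ gcdb b1 b2 m n := Int.natCast_dvd_natCast.2 hdg
    exact ⟨(pow_dvd_pow_of_dvd hdg b1).trans hgm, (pow_dvd_pow_of_dvd hdg b2).trans hgn⟩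
  · rintro ⟨hdm, hdn⟩
    refine Nat.dvd_sSup_of_forall_lcm_mem hS (fun h => h.1.ne rfl) ?_ ⟨hd, hdm, hdn⟩
    rintro a ⟨ha, ham, han⟩ b ⟨hb, hbm, hbn⟩
    exact ⟨Nat.lcm_pos ha hb, Int.natCast_lcm_pow_dvd ham hbm, Int.natCast_lcm_pow_dvd han hbn⟩
end

section
/- For any prime p and nonnegative integers k1, k2, gcd_b(p^{k1}, p^{k2}) = p^{min(⌊k1/b1⌋, ⌊k2/b2⌋)}. -/
theorem stmt_2 (b1 b2 : ℕ) (hb1 : 0 < b1) (hb2 : 0 < b2) (p : ℕ) (hp : p.Prime)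
    (k1 k2 : ℕ) :
    gcdb b1 b2 ((p : ℤ) ^ k1) ((p : ℤ) ^ k2) = p ^ (min (k1 / b1) (k2 / b2)) := by
  have hp1 : 1 < p := hp.one_lt
  have hkey : ∀ d ∈ {d : ℕ | 0 < d ∧ (d : ℤ) ^ b1 ∣ (p:ℤ)^k1 ∧ (d : ℤ) ^ b2 ∣ (p:ℤ)^k2},
      d ≤ p ^ (min (k1 / b1) (k2 / b2)) := by
    rintro d ⟨hd, h1, h2⟩
    have h1' : d ^ b1 ∣ p ^ k1 := by
      have := h1; rw [← Nat.cast_pow, ← Nat.cast_pow, Int.natCast_dvd_natCast] at this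
      exact this
    have h2' : d ^ b2 ∣ p ^ k2 := by
      have := h2; rw [← Nat.cast_pow, ← Nat.cast_pow, Int.natCast_dvd_natCast] at this
      exact this
    have hdvd : d ∣ p ^ k1 := dvd_trans (dvd_pow_self d hb1.ne') h1'
    obtain ⟨j, hj, rfl⟩ := (Nat.dvd_prime_pow hp).mp hdvd
    have hj1 : j * b1 ≤ k1 := by
      have : p ^ (j * b1) ∣ p ^ k1 := by rwa [pow_mul]
      exact (Nat.pow_dvd_pow_iff_le_right hp1).mp this
    have hj2 : j * b2 ≤ k2 := by
      have : p ^ (j * b2) ∣ p ^ k2 := by rwa [pow_mul]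
      exact (Nat.pow_dvd_pow_iff_le_right hp1).mp this
    have : j ≤ min (k1 / b1) (k2 / b2) :=
      le_min ((Nat.le_div_iff_mul_le hb1).mpr hj1) ((Nat.le_div_iff_mul_le hb2).mpr hj2)
    exact Nat.pow_le_pow_right hp.pos this
  have hmem : p ^ (min (k1 / b1) (k2 / b2)) ∈
      {d : ℕ | 0 < d ∧ (d : ℤ) ^ b1 ∣ (p:ℤ)^k1 ∧ (d : ℤ) ^ b2 ∣ (p:ℤ)^k2} := by
    refine ⟨pow_pos hp.pos _, ?_, ?_⟩
    · push_cast; rw [← pow_mul]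
      apply pow_dvd_pow
      calc min (k1 / b1) (k2 / b2) * b1 ≤ (k1 / b1) * b1 :=
            Nat.mul_le_mul_right _ (min_le_left _ _)
        _ ≤ k1 := Nat.div_mul_le_self _ _
    · push_cast; rw [← pow_mul]
      apply pow_dvd_pow
      calc min (k1 / b1) (k2 / b2) * b2 ≤ (k2 / b2) * b2 :=
            Nat.mul_le_mul_right _ (min_le_right _ _)
        _ ≤ k2 := Nat.div_mul_le_self _ _
  have hbdd : BddAbove {d : ℕ | 0 < d ∧ (d : ℤ) ^ b1 ∣ (p:ℤ)^k1 ∧ (d : ℤ) ^ b2 ∣ (p:ℤ)^k2} :=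
    ⟨p ^ (min (k1 / b1) (k2 / b2)), hkey⟩
  exact le_antisymm (csSup_le ⟨_, hmem⟩ hkey) (le_csSup hbdd hmem)
end

section
/- Let P = (p1,p2) and Q = (q1,q2) be lattice points with p1 ≠ q1 and p2 ≠ q2. Then P is b-visible from Q (i.e., some curve a1·(y−q2)^{b1} = a2·(x−q1)^{b2} with (a1,a2) ∈ ℚ²∖{(0,0)} passes through P and Q with no other lattice point on the arc between them) if and only if gcd_b(p1−q1, p2−q2) = 1. -/
/-- The point `R` lies on the curve `a1 (y - Q.2)^{b1} = a2 (x - Q.1)^{b2}`. -/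
def OnCurve (b1 b2 : ℕ) (a1 a2 : ℚ) (Q R : ℤ × ℤ) : Prop :=
  a1 * ((R.2 : ℚ) - (Q.2 : ℚ)) ^ b1 = a2 * ((R.1 : ℚ) - (Q.1 : ℚ)) ^ b2

/-- The point `R` lies in the coordinate box spanned by `P` and `Q` (i.e. on the arc
of a monotone curve between `P` and `Q`). -/
def BetweenPts (P Q R : ℤ × ℤ) : Prop :=
  (min P.1 Q.1 ≤ R.1 ∧ R.1 ≤ max P.1 Q.1) ∧ (min P.2 Q.2 ≤ R.2 ∧ R.2 ≤ max P.2 Q.2)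

/-- `P` is b-visible from `Q`: some curve `a1 (y - Q.2)^{b1} = a2 (x - Q.1)^{b2}` with
`(a1, a2) ≠ (0,0)` passes through `P`, and no lattice point other than `P` and `Q` lies on
the arc of the curve between `P` and `Q`. -/
def BVisible (b1 b2 : ℕ) (P Q : ℤ × ℤ) : Prop :=
  ∃ a1 a2 : ℚ, (a1, a2) ≠ (0, 0) ∧ OnCurve b1 b2 a1 a2 Q P ∧
    ∀ R : ℤ × ℤ, OnCurve b1 b2 a1 a2 Q R → BetweenPts P Q R → R = P ∨ R = Q

lemma box_pow_one {m s k : ℤ} (hm : m ≠ 0) (hk : k ≠ 0) (hs : s = m * k)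
    (hlo : min 0 m ≤ s) (hhi : s ≤ max 0 m) : k = 1 := by
  rcases hm.lt_or_gt with h | h
  · have hmin : min 0 m = m := min_eq_right h.le
    have hmax : max 0 m = 0 := max_eq_left h.le
    rw [hmin, hs] at hlo
    rw [hmax, hs] at hhi
    have hk1 : k ≤ 1 := by by_contra hc; push_neg at hc; nlinarith
    have hk0 : 0 ≤ k := by by_contra hc; push_neg at hc; nlinarith
    omega
  · have hmin : min 0 m = 0 := min_eq_left h.le
    have hmax : max 0 m = m := max_eq_right h.le
    rw [hmin, hs] at hlo
    rw [hmax, hs] at hhi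
    have hk1 : k ≤ 1 := by by_contra hc; push_neg at hc; nlinarith
    have hk0 : 0 ≤ k := by by_contra hc; push_neg at hc; nlinarith
    omega


lemma gcdbS_bdd {b1 b2 : ℕ} (hb1 : 0 < b1) {m n : ℤ} (hm : m ≠ 0) :
    ∀ d ∈ {d : ℕ | 0 < d ∧ (d : ℤ) ^ b1 ∣ m ∧ (d : ℤ) ^ b2 ∣ n}, d ≤ m.natAbs := by
  rintro d ⟨hd, hd1, -⟩
  have h1 : d ^ b1 ∣ m.natAbs := by
    have h : ((d ^ b1 : ℕ) : ℤ) ∣ m := by push_cast; exact hd1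
    have h2 := Int.natAbs_dvd_natAbs.mpr h
    rwa [Int.natAbs_natCast] at h2
  have h2 : d ^ b1 ≤ m.natAbs := Nat.le_of_dvd (Int.natAbs_pos.mpr hm) h1
  exact le_trans (Nat.le_self_pow hb1.ne' d) h2

lemma gcdb_one_iff (b1 b2 : ℕ) (hb1 : 0 < b1) (m n : ℤ) (hm : m ≠ 0) :
    gcdb b1 b2 m n = 1 ↔ ∀ d : ℕ, 0 < d → (d:ℤ)^b1 ∣ m → (d:ℤ)^b2 ∣ n → d = 1 := by
  have h1S : 1 ∈ {d : ℕ | 0 < d ∧ (d : ℤ) ^ b1 ∣ m ∧ (d : ℤ) ^ b2 ∣ n} := by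
    refine ⟨one_pos, ?_, ?_⟩ <;> simp
  have hbdd : BddAbove {d : ℕ | 0 < d ∧ (d : ℤ) ^ b1 ∣ m ∧ (d : ℤ) ^ b2 ∣ n} :=
    ⟨m.natAbs, fun d hd => gcdbS_bdd hb1 hm d hd⟩
  constructor
  · intro h d hd hd1 hd2
    have := le_csSup hbdd (Set.mem_setOf.mpr ⟨hd, hd1, hd2⟩)
    rw [show sSup _ = gcdb b1 b2 m n from rfl, h] at this
    omega
  · intro h
    have hmem := Nat.sSup_mem ⟨1, h1S⟩ hbdd
    exact h _ hmem.1 hmem.2.1 hmem.2.2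


theorem stmt_4 (b1 b2 : ℕ) (hb1 : 0 < b1) (hb2 : 0 < b2) (hb : Nat.Coprime b1 b2)
    (P Q : ℤ × ℤ) (h1 : P.1 ≠ Q.1) (h2 : P.2 ≠ Q.2) :
    BVisible b1 b2 P Q ↔ gcdb b1 b2 (P.1 - Q.1) (P.2 - Q.2) = 1 := by
  have hm : P.1 - Q.1 ≠ 0 := sub_ne_zero.mpr h1
  have hn : P.2 - Q.2 ≠ 0 := sub_ne_zero.mpr h2
  rw [gcdb_one_iff b1 b2 hb1 _ _ hm]
  constructor
  · rintro ⟨a1, a2, -, hP, hall⟩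
    by_contra hcon
    push_neg at hcon
    obtain ⟨e, he0, he1, he2, hene⟩ := hcon
    have he2' : (2 : ℤ) ≤ (e : ℤ) := by exact_mod_cast (by omega : 2 ≤ e)
    obtain ⟨m', hm'⟩ := he1
    obtain ⟨n', hn'⟩ := he2
    have hE1 : (2 : ℤ) ≤ (e : ℤ) ^ b1 := le_trans he2' (le_self_pow₀ (by linarith) hb1.ne')
    have hE2 : (2 : ℤ) ≤ (e : ℤ) ^ b2 := le_trans he2' (le_self_pow₀ (by linarith) hb2.ne')
    have hm'0 : m' ≠ 0 := by rintro rfl; simp at hm'; exact hm hm'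
    have hn'0 : n' ≠ 0 := by rintro rfl; simp at hn'; exact hn hn'
    -- strict order facts for omega
    have hf1 : m' < 0 → P.1 - Q.1 < m' := fun h => by rw [hm']; nlinarith
    have hf2 : 0 < m' → m' < P.1 - Q.1 := fun h => by rw [hm']; nlinarith
    have hg1 : n' < 0 → P.2 - Q.2 < n' := fun h => by rw [hn']; nlinarith
    have hg2 : 0 < n' → n' < P.2 - Q.2 := fun h => by rw [hn']; nlinarith
    have heQ : ((e : ℚ)) ≠ 0 := by positivity
    have hOC : OnCurve b1 b2 a1 a2 Q (Q.1 + m', Q.2 + n') := by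
      unfold OnCurve at hP ⊢
      have hA : ((P.2 : ℚ) - (Q.2 : ℚ)) = (e : ℚ) ^ b2 * (n' : ℚ) := by
        have := congrArg (fun z : ℤ => (z : ℚ)) hn'
        push_cast at this
        linarith
      have hB : ((P.1 : ℚ) - (Q.1 : ℚ)) = (e : ℚ) ^ b1 * (m' : ℚ) := by
        have := congrArg (fun z : ℤ => (z : ℚ)) hm'
        push_cast at this
        linarith
      rw [hA, hB] at hP
      apply mul_left_cancel₀ (pow_ne_zero (b1 * b2) heQ)
      calc (e : ℚ) ^ (b1 * b2) * (a1 * (((Q.2 + n' : ℤ) : ℚ) - (Q.2 : ℚ)) ^ b1)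
          = a1 * ((e : ℚ) ^ b2 * (n' : ℚ)) ^ b1 := by push_cast; ring
        _ = a2 * ((e : ℚ) ^ b1 * (m' : ℚ)) ^ b2 := hP
        _ = (e : ℚ) ^ (b1 * b2) * (a2 * (((Q.1 + m' : ℤ) : ℚ) - (Q.1 : ℚ)) ^ b2) := by
            push_cast; ring
    have hBet : BetweenPts P Q (Q.1 + m', Q.2 + n') := by
      refine ⟨⟨?_, ?_⟩, ⟨?_, ?_⟩⟩ <;> simp only [] <;> omega
    rcases hall _ hOC hBet with h | h
    · have hx := congrArg Prod.fst h
      simp only [] at hx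
      omega
    · have hx := congrArg Prod.fst h
      simp only [] at hx
      omega
  · intro hg
    refine ⟨((P.1 - Q.1 : ℤ) : ℚ) ^ b2, ((P.2 - Q.2 : ℤ) : ℚ) ^ b1, ?_, ?_, ?_⟩
    · simp only [ne_eq, Prod.mk.injEq, not_and]
      intro hz
      exact absurd (pow_eq_zero_iff hb2.ne' |>.mp hz) (by exact_mod_cast hm)
    · unfold OnCurve
      push_cast
      ring
    · intro R hOC hBet
      have hmQ : ((P.1 - Q.1 : ℤ) : ℚ) ≠ 0 := Int.cast_ne_zero.mpr hm
      have hnQ : ((P.2 - Q.2 : ℤ) : ℚ) ≠ 0 := Int.cast_ne_zero.mpr hn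
      -- integer curve equation
      have heq : (P.1 - Q.1) ^ b2 * (R.2 - Q.2) ^ b1 = (P.2 - Q.2) ^ b1 * (R.1 - Q.1) ^ b2 := by
        unfold OnCurve at hOC
        push_cast at hOC
        have : (((P.1 - Q.1) ^ b2 * (R.2 - Q.2) ^ b1 : ℤ) : ℚ)
            = (((P.2 - Q.2) ^ b1 * (R.1 - Q.1) ^ b2 : ℤ) : ℚ) := by push_cast; linarith [hOC]
        exact_mod_cast this
      by_cases hs0 : R.1 - Q.1 = 0
      · right
        have ht0 : R.2 - Q.2 = 0 := by
          rw [hs0] at heq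
          have hz : (P.1 - Q.1) ^ b2 * (R.2 - Q.2) ^ b1 = 0 := by
            rw [heq]; simp [zero_pow hb2.ne']
          rcases mul_eq_zero.mp hz with h | h
          · exact absurd (pow_eq_zero_iff hb2.ne' |>.mp h) hm
          · exact pow_eq_zero_iff hb1.ne' |>.mp h
        exact Prod.ext (by omega) (by omega)
      · by_cases ht0 : R.2 - Q.2 = 0
        · exfalso
          rw [ht0] at heq
          have hz : (P.2 - Q.2) ^ b1 * (R.1 - Q.1) ^ b2 = 0 := by
            rw [← heq]; simp [zero_pow hb1.ne']
          rcases mul_eq_zero.mp hz with h | h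
          · exact hn (pow_eq_zero_iff hb1.ne' |>.mp h)
          · exact hs0 (pow_eq_zero_iff hb2.ne' |>.mp h)
        · -- main case
          have hsQ : ((R.1 - Q.1 : ℤ) : ℚ) ≠ 0 := Int.cast_ne_zero.mpr hs0
          have htQ : ((R.2 - Q.2 : ℤ) : ℚ) ≠ 0 := Int.cast_ne_zero.mpr ht0
          set r : ℚˣ := Units.mk0 _ (div_ne_zero hsQ hmQ) with hr
          set u : ℚˣ := Units.mk0 _ (div_ne_zero htQ hnQ) with hu
          have hru : u ^ ((b1 : ℤ)) = r ^ ((b2 : ℤ)) := by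
            rw [zpow_natCast, zpow_natCast]
            apply Units.ext
            rw [Units.val_pow_eq_pow_val, Units.val_pow_eq_pow_val, hr, hu,
              Units.val_mk0, Units.val_mk0,
              div_pow, div_pow, div_eq_div_iff (pow_ne_zero _ hnQ) (pow_ne_zero _ hmQ)]
            have hQ : ((P.1 - Q.1 : ℤ) : ℚ) ^ b2 * ((R.2 - Q.2 : ℤ) : ℚ) ^ b1
                = ((P.2 - Q.2 : ℤ) : ℚ) ^ b1 * ((R.1 - Q.1 : ℤ) : ℚ) ^ b2 := by
              exact_mod_cast heq
            linarith
          obtain ⟨x, y, hxy⟩ : IsCoprime (b1 : ℤ) (b2 : ℤ) := Nat.isCoprime_iff_coprime.mpr hb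
          set w : ℚˣ := r ^ x * u ^ y with hwdef
          have hw1 : w ^ ((b1 : ℤ)) = r := by
            rw [hwdef, mul_zpow, ← zpow_mul, ← zpow_mul, mul_comm y ((b1 : ℤ)),
              zpow_mul u ((b1 : ℤ)) y, hru, ← zpow_mul, ← zpow_add,
              show x * ((b1 : ℤ)) + ((b2 : ℤ)) * y = 1 by linear_combination hxy, zpow_one]
          have hw2 : w ^ ((b2 : ℤ)) = u := by
            rw [hwdef, mul_zpow, ← zpow_mul, ← zpow_mul, mul_comm x ((b2 : ℤ)),
              zpow_mul r ((b2 : ℤ)) x, ← hru, ← zpow_mul, ← zpow_add,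
              show ((b1 : ℤ)) * x + y * ((b2 : ℤ)) = 1 by linear_combination hxy, zpow_one]
          set q : ℚ := (w : ℚ) with hq
          have hq1 : q ^ b1 = ((R.1 - Q.1 : ℤ) : ℚ) / ((P.1 - Q.1 : ℤ) : ℚ) := by
            have : ((w ^ b1 : ℚˣ) : ℚ) = ((r : ℚˣ) : ℚ) := by
              rw [← zpow_natCast w b1, hw1]
            rwa [Units.val_pow_eq_pow_val] at this
          have hq2 : q ^ b2 = ((R.2 - Q.2 : ℤ) : ℚ) / ((P.2 - Q.2 : ℤ) : ℚ) := by
            have : ((w ^ b2 : ℚˣ) : ℚ) = ((u : ℚˣ) : ℚ) := by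
              rw [← zpow_natCast w b2, hw2]
            rwa [Units.val_pow_eq_pow_val] at this
          have hden0 : ((q.den : ℤ)) ≠ 0 := by exact_mod_cast q.den_nz
          have hdenQ : ((q.den : ℚ)) ≠ 0 := by exact_mod_cast q.den_nz
          have hnum0 : q.num ≠ 0 := Rat.num_ne_zero.mpr (Units.ne_zero w)
          have key1 : q.num ^ b1 * (P.1 - Q.1) = (R.1 - Q.1) * (q.den : ℤ) ^ b1 := by
            have h := hq1
            rw [← Rat.num_div_den q, div_pow,
              div_eq_div_iff (pow_ne_zero _ hdenQ) hmQ] at h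
            exact_mod_cast h
          have key2 : q.num ^ b2 * (P.2 - Q.2) = (R.2 - Q.2) * (q.den : ℤ) ^ b2 := by
            have h := hq2
            rw [← Rat.num_div_den q, div_pow,
              div_eq_div_iff (pow_ne_zero _ hdenQ) hnQ] at h
            exact_mod_cast h
          have hcop : IsCoprime ((q.den : ℤ)) q.num := by
            rw [Int.isCoprime_iff_gcd_eq_one, Int.gcd]
            simpa using q.reduced.symm
          have hdvd1 : ((q.den : ℤ)) ^ b1 ∣ (P.1 - Q.1) := by
            refine (hcop.pow (m := b1) (n := b1)).dvd_of_dvd_mul_left ?_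
            exact ⟨R.1 - Q.1, by linarith [key1]⟩
          have hdvd2 : ((q.den : ℤ)) ^ b2 ∣ (P.2 - Q.2) := by
            refine (hcop.pow (m := b2) (n := b2)).dvd_of_dvd_mul_left ?_
            exact ⟨R.2 - Q.2, by linarith [key2]⟩
          have hd1 : q.den = 1 := hg q.den q.pos hdvd1 hdvd2
          rw [hd1] at key1 key2
          simp only [Int.natCast_one, one_pow, mul_one] at key1 key2
          have hlo1 : min 0 (P.1 - Q.1) ≤ R.1 - Q.1 := by
            have := hBet.1.1; omega
          have hhi1 : R.1 - Q.1 ≤ max 0 (P.1 - Q.1) := by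
            have := hBet.1.2; omega
          have hlo2 : min 0 (P.2 - Q.2) ≤ R.2 - Q.2 := by
            have := hBet.2.1; omega
          have hhi2 : R.2 - Q.2 ≤ max 0 (P.2 - Q.2) := by
            have := hBet.2.2; omega
          have k1 : q.num ^ b1 = 1 :=
            box_pow_one hm (pow_ne_zero _ hnum0)
              (by linarith [key1]) hlo1 hhi1
          have k2 : q.num ^ b2 = 1 :=
            box_pow_one hn (pow_ne_zero _ hnum0)
              (by linarith [key2]) hlo2 hhi2
          have hunit : q.num = 1 ∨ q.num = -1 := by
            have hdvd : q.num ∣ 1 := k1 ▸ dvd_pow_self q.num hb1.ne'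
            exact Int.isUnit_iff.mp (isUnit_of_dvd_one hdvd)
          rcases hunit with hc | hc
          · left
            rw [hc, one_pow] at k1 k2
            have hs : R.1 - Q.1 = P.1 - Q.1 := by rw [hc, one_pow, one_mul] at key1; omega
            have ht : R.2 - Q.2 = P.2 - Q.2 := by rw [hc, one_pow, one_mul] at key2; omega
            exact Prod.ext (by omega) (by omega)
          · exfalso
            rw [hc] at k1 k2
            have he1 : Even b1 := by
              rcases Nat.even_or_odd b1 with h | h
              · exact h
              · rw [h.neg_one_pow] at k1; omega
            have he2 : Even b2 := by
              rcases Nat.even_or_odd b2 with h | h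
              · exact h
              · rw [h.neg_one_pow] at k2; omega
            have : 2 ∣ Nat.gcd b1 b2 := Nat.dvd_gcd he1.two_dvd he2.two_dvd
            rw [hb] at this
            omega
end

section
/- For 0 < α < 1, n ∈ ℕ, any integer d with 1 ≤ d ≤ n, and any a ∈ {0,1,...,d−1}, the sum over 0 ≤ k ≤ n with k ≡ a (mod d) of C(n,k)·α^k·(1−α)^{n−k} equals 1/d + O_α(n^{−1/2}), where the implied constant depends only on α. -/
/-
The weights `q k = C(n,k) α^k (1-α)^(n-k)` sum to `1` and are unimodal: they increase up to the
mode `⌊α(n+1)⌋` and decrease after it. Cut `ℕ` into blocks of `d` consecutive integers. In each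
block the weight at residue `a` differs from the block average by at most the variation of `q` on
the block, so the residue class sum differs from `1/d` by at most the total variation of `q`,
which for a unimodal sequence is at most twice its maximum. Stirling's formula together with the
entropy inequality `(nα)^k (n(1-α))^(n-k) ≤ k^k (n-k)^(n-k)` bounds the maximum by
`e / (π √(α(1-α)n))` once `αn, (1-α)n ≥ 2`; for the finitely many smaller `n` the trivial bound
`1` suffices.
-/

open Finset Real
open scoped Nat

theorem sum_range_mul_eq_sum_sum {M : Type*} [AddCommMonoid M] (g : ℕ → M) (B d : ℕ) :
    ∑ k ∈ range (B * d), g k = ∑ j ∈ range B, ∑ i ∈ range d, g (j * d + i) := by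
  induction B with
  | zero => simp
  | succ B ih =>
    rw [sum_range_succ, ← ih, ← sum_range_add_sum_Ico g (Nat.mul_le_mul_right d B.le_succ),
      sum_Ico_eq_sum_range,
      show (B + 1) * d - B * d = d by rw [add_mul, one_mul, Nat.add_sub_cancel_left]]

theorem abs_sub_le_sum_abs_sub_succ (f : ℕ → ℝ) {x y N : ℕ} (hx : x ≤ N) (hy : y ≤ N) :
    |f x - f y| ≤ ∑ i ∈ range N, |f (i + 1) - f i| := by
  wlog hxy : y ≤ x generalizing x y
  · rw [abs_sub_comm]; exact this hy hx (by omega)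
  rw [← sum_Ico_sub f hxy]
  refine (abs_sum_le_sum_abs _ _).trans
    (sum_le_sum_of_subset_of_nonneg (fun i hi => ?_) fun _ _ _ => abs_nonneg _)
  simp only [mem_Ico, mem_range] at hi ⊢
  omega

theorem sum_abs_sub_succ_le_of_unimodal {f : ℕ → ℝ} (hf : ∀ k, 0 ≤ f k) {m : ℕ}
    (hup : ∀ k < m, f k ≤ f (k + 1)) (hdown : ∀ k, m ≤ k → f (k + 1) ≤ f k) (N : ℕ) :
    ∑ i ∈ range N, |f (i + 1) - f i| ≤ 2 * f m := by
  set M := max N m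
  calc ∑ i ∈ range N, |f (i + 1) - f i| ≤ ∑ i ∈ range M, |f (i + 1) - f i| :=
        sum_le_sum_of_subset_of_nonneg (range_subset_range.2 (le_max_left N m))
          fun _ _ _ => abs_nonneg _
    _ = ∑ i ∈ range m, (f (i + 1) - f i) - ∑ i ∈ Ico m M, (f (i + 1) - f i) := by
        rw [← sum_range_add_sum_Ico _ (le_max_right N m), sub_eq_add_neg, ← sum_neg_distrib]
        congr 1
        · exact sum_congr rfl fun i hi => abs_of_nonneg (sub_nonneg.2 (hup i (mem_range.1 hi)))
        · exact sum_congr rfl fun i hi =>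
            abs_of_nonpos (sub_nonpos.2 (hdown i (mem_Ico.1 hi).1))
    _ = 2 * f m - f 0 - f M := by
        rw [sum_range_sub, sum_Ico_sub f (le_max_right N m)]; ring
    _ ≤ 2 * f m := by linarith [hf 0, hf M]

theorem abs_sum_filter_mod_sub_le (f : ℕ → ℝ) {a d : ℕ} (ha : a < d) (B : ℕ) :
    |∑ k ∈ (range (B * d)).filter (· % d = a), f k - (∑ k ∈ range (B * d), f k) / d|
      ≤ ∑ i ∈ range (B * d), |f (i + 1) - f i| := by
  have hd : (0 : ℝ) < d := by exact_mod_cast (Nat.zero_le a).trans_lt ha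
  set V : ℕ → ℝ := fun j => ∑ i ∈ range d, |f (j * d + i + 1) - f (j * d + i)|
  have hfilter :
      ∑ k ∈ (range (B * d)).filter (· % d = a), f k = ∑ j ∈ range B, f (j * d + a) := by
    rw [sum_filter, sum_range_mul_eq_sum_sum]
    refine sum_congr rfl fun j _ => ?_
    rw [sum_congr rfl fun i hi => by rw [Nat.mul_add_mod_of_lt (mem_range.1 hi)], sum_ite_eq',
      if_pos (mem_range.2 ha)]
  have hblock : ∀ j, |∑ i ∈ range d, (f (j * d + a) - f (j * d + i))| ≤ d * V j := by
    intro j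
    calc |∑ i ∈ range d, (f (j * d + a) - f (j * d + i))|
        ≤ ∑ i ∈ range d, |f (j * d + a) - f (j * d + i)| := abs_sum_le_sum_abs _ _
      _ ≤ ∑ _i ∈ range d, V j := sum_le_sum fun i hi =>
          abs_sub_le_sum_abs_sub_succ (fun i => f (j * d + i)) ha.le (mem_range.1 hi).le
      _ = d * V j := by rw [sum_const, card_range, nsmul_eq_mul]
  calc |∑ k ∈ (range (B * d)).filter (· % d = a), f k - (∑ k ∈ range (B * d), f k) / d|
      = |∑ j ∈ range B, ∑ i ∈ range d, (f (j * d + a) - f (j * d + i))| / d := by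
        rw [hfilter, sum_range_mul_eq_sum_sum, ← abs_of_pos hd, ← abs_div, abs_of_pos hd]
        congr 1
        simp only [sum_sub_distrib, sum_const, card_range, nsmul_eq_mul]
        rw [sub_div, ← mul_sum, mul_div_cancel_left₀ _ hd.ne']
    _ ≤ (∑ j ∈ range B, d * V j) / d := by
        gcongr
        exact (abs_sum_le_sum_abs _ _).trans (sum_le_sum fun j _ => hblock j)
    _ = ∑ i ∈ range (B * d), |f (i + 1) - f i| := by
        rw [← mul_sum, mul_div_cancel_left₀ _ hd.ne', sum_range_mul_eq_sum_sum]

theorem factorial_le_exp_one_mul_sqrt_mul_pow {n : ℕ} (hn : n ≠ 0) :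
    (n ! : ℝ) ≤ exp 1 * √n * (n / exp 1) ^ n := by
  obtain ⟨m, rfl⟩ := Nat.exists_eq_succ_of_ne_zero hn
  have h := Stirling.stirlingSeq'_antitone (Nat.zero_le m)
  simp only [Function.comp_apply, Nat.succ_eq_add_one, zero_add, Stirling.stirlingSeq_one] at h
  rw [Stirling.stirlingSeq, div_le_iff₀ (by positivity)] at h
  calc ((m + 1) ! : ℝ) ≤ exp 1 / √2 * (√(2 * (m + 1 : ℕ)) * ((m + 1 : ℕ) / exp 1) ^ (m + 1)) := h
    _ = _ := by
      rw [sqrt_mul zero_le_two]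
      field_simp

theorem pow_le_pow_mul_exp_sub {x : ℝ} (hx : 0 ≤ x) (k : ℕ) : x ^ k ≤ k ^ k * exp (x - k) := by
  rcases Nat.eq_zero_or_pos k with rfl | hk
  · simpa using one_le_exp hx
  have hk' : (0 : ℝ) < k := Nat.cast_pos.2 hk
  calc x ^ k = k ^ k * (x / k) ^ k := by rw [div_pow]; field_simp
    _ ≤ k ^ k * exp (x / k - 1) ^ k := by
      gcongr
      linarith [add_one_le_exp (x / k - 1)]
    _ = k ^ k * exp (x - k) := by
      rw [← exp_nat_mul]; congr 2; field_simp

theorem pow_mul_pow_le_of_add_eq {x y : ℝ} (hx : 0 ≤ x) (hy : 0 ≤ y) {k r : ℕ}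
    (hxy : x + y = k + r) : x ^ k * y ^ r ≤ k ^ k * r ^ r := by
  calc x ^ k * y ^ r ≤ (k ^ k * exp (x - k)) * (r ^ r * exp (y - r)) :=
        mul_le_mul (pow_le_pow_mul_exp_sub hx k) (pow_le_pow_mul_exp_sub hy r)
          (by positivity) (by positivity)
    _ = k ^ k * r ^ r * exp (x + y - k - r) := by rw [mul_mul_mul_comm, ← exp_add]; ring_nf
    _ = k ^ k * r ^ r := by rw [hxy]; simp

theorem sqrt_two_mul_pi_mul_mul_pow_le (m : ℕ) : √(2 * π * m) * m ^ m ≤ m ! * exp 1 ^ m := by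
  have h := Stirling.le_factorial_stirling m
  rw [div_pow, mul_div_assoc', div_le_iff₀ (by positivity)] at h
  exact h

theorem choose_mul_pow_mul_pow_le {k r : ℕ} (hk : k ≠ 0) (hr : r ≠ 0) :
    2 * π * √(k * r) * ((k + r).choose k * k ^ k * r ^ r)
      ≤ exp 1 * √(k + r) * (k + r) ^ (k + r) := by
  have hkr : ((k + r).choose k : ℝ) * k ! * r ! = (k + r) ! := by
    rw [Nat.choose_symm_add]; exact_mod_cast Nat.add_choose_mul_factorial_mul_factorial k r
  have hn := factorial_le_exp_one_mul_sqrt_mul_pow (n := k + r) (by omega)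
  have hsqrt : 2 * π * √(k * r) = √(2 * π * k) * √(2 * π * r) := by
    have h2π := mul_self_sqrt (show (0 : ℝ) ≤ 2 * π by positivity)
    rw [sqrt_mul (Nat.cast_nonneg _), sqrt_mul (by positivity) (k : ℝ),
      sqrt_mul (by positivity) (r : ℝ)]
    linear_combination -(√k * √r) * h2π
  calc 2 * π * √(k * r) * ((k + r).choose k * k ^ k * r ^ r)
      = (k + r).choose k * ((√(2 * π * k) * k ^ k) * (√(2 * π * r) * r ^ r)) := by
        rw [hsqrt]; ring
    _ ≤ (k + r).choose k * ((k ! * exp 1 ^ k) * (r ! * exp 1 ^ r)) := by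
        gcongr ?_ * (?_ * ?_) <;> exact sqrt_two_mul_pi_mul_mul_pow_le _
    _ = (k + r) ! * exp 1 ^ (k + r) := by rw [← hkr]; ring
    _ ≤ exp 1 * √(k + r) * ((k + r) / exp 1) ^ (k + r) * exp 1 ^ (k + r) := by
        push_cast at hn; gcongr
    _ = exp 1 * √(k + r) * (k + r) ^ (k + r) := by
        rw [div_pow]; field_simp

noncomputable def binomTerm (α : ℝ) (n k : ℕ) : ℝ := n.choose k * α ^ k * (1 - α) ^ (n - k)

section
variable {α : ℝ} {n : ℕ}

theorem binomTerm_nonneg (hα0 : 0 ≤ α) (hα1 : α ≤ 1) (k : ℕ) : 0 ≤ binomTerm α n k := by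
  have : 0 ≤ 1 - α := sub_nonneg.2 hα1
  unfold binomTerm; positivity

theorem binomTerm_eq_zero_of_lt {k : ℕ} (h : n < k) : binomTerm α n k = 0 := by
  simp [binomTerm, Nat.choose_eq_zero_of_lt h]

variable (α n) in
theorem sum_range_binomTerm : ∑ k ∈ range (n + 1), binomTerm α n k = 1 := by
  have h := add_pow α (1 - α) n
  rw [add_sub_cancel, one_pow] at h
  rw [h]
  exact sum_congr rfl fun k _ => by rw [binomTerm]; ring

variable (α n) in
theorem one_sub_mul_succ_mul_binomTerm_succ (k : ℕ) :
    (1 - α) * (k + 1) * binomTerm α n (k + 1) = α * (n - k : ℕ) * binomTerm α n k := by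
  rcases lt_or_ge k n with hk | hk
  · have hchoose : (n.choose (k + 1) : ℝ) * (k + 1) = n.choose k * (n - k : ℕ) := by
      exact_mod_cast Nat.choose_succ_right_eq n k
    have hpow : (1 - α) ^ (n - k) = (1 - α) ^ (n - (k + 1)) * (1 - α) := by
      rw [← pow_succ]; congr 1; omega
    rw [binomTerm, binomTerm, hpow]
    linear_combination α ^ k * α * (1 - α) ^ (n - (k + 1)) * (1 - α) * hchoose
  · simp [binomTerm_eq_zero_of_lt (Nat.lt_succ_of_le hk), Nat.sub_eq_zero_of_le hk]

theorem binomTerm_le_binomTerm_succ (hα0 : 0 ≤ α) (hα1 : α < 1) {k : ℕ}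
    (hk : (k + 1 : ℝ) ≤ α * (n + 1)) : binomTerm α n k ≤ binomTerm α n (k + 1) := by
  have hkn : k < n := by
    have : (k : ℝ) < n := by nlinarith
    exact_mod_cast this
  have hrec := one_sub_mul_succ_mul_binomTerm_succ α n k
  rw [Nat.cast_sub hkn.le] at hrec
  have hq := binomTerm_nonneg hα0 hα1.le (n := n) k
  have hpos : 0 < (1 - α) * (k + 1) := by
    have : 0 < 1 - α := sub_pos.2 hα1
    positivity
  refine le_of_mul_le_mul_left ?_ hpos
  rw [hrec]
  exact mul_le_mul_of_nonneg_right (by linarith) hq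

theorem binomTerm_succ_le_binomTerm (hα0 : 0 ≤ α) (hα1 : α < 1) {k : ℕ}
    (hk : α * (n + 1) ≤ k + 1) : binomTerm α n (k + 1) ≤ binomTerm α n k := by
  have hrec := one_sub_mul_succ_mul_binomTerm_succ α n k
  have hq := binomTerm_nonneg hα0 hα1.le (n := n) k
  have hpos : 0 < (1 - α) * (k + 1) := by
    have : 0 < 1 - α := sub_pos.2 hα1
    positivity
  refine le_of_mul_le_mul_left ?_ hpos
  rw [hrec]
  refine mul_le_mul_of_nonneg_right ?_ hq
  rcases lt_or_ge k n with hkn | hkn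
  · rw [Nat.cast_sub hkn.le]; linarith
  · rw [Nat.sub_eq_zero_of_le hkn, Nat.cast_zero, mul_zero]; exact hpos.le

theorem two_mul_pi_mul_sqrt_mul_binomTerm_le (hα0 : 0 ≤ α) (hα1 : α ≤ 1) {k : ℕ} (hk : k ≠ 0)
    (hkn : k < n) : 2 * π * √(k * (n - k : ℕ)) * binomTerm α n k ≤ exp 1 * √n := by
  obtain ⟨r, rfl⟩ := Nat.exists_eq_add_of_lt hkn
  set r' := r + 1
  rw [show k + r + 1 = k + r' by omega, binomTerm, Nat.add_sub_cancel_left]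
  have hpow : 0 < (k : ℝ) ^ k * r' ^ r' := by positivity
  refine le_of_mul_le_mul_right ?_ hpow
  calc 2 * π * √(k * r') * ((k + r').choose k * α ^ k * (1 - α) ^ r') * (k ^ k * r' ^ r')
      = 2 * π * √(k * r') * ((k + r').choose k * k ^ k * r' ^ r') * (α ^ k * (1 - α) ^ r') := by
        ring
    _ ≤ exp 1 * √(k + r') * (k + r') ^ (k + r') * (α ^ k * (1 - α) ^ r') := by
        have : 0 ≤ 1 - α := sub_nonneg.2 hα1
        exact mul_le_mul_of_nonneg_right (choose_mul_pow_mul_pow_le hk (by omega)) (by positivity)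
    _ = exp 1 * √(k + r') * (((k + r') * α) ^ k * ((k + r') * (1 - α)) ^ r') := by
        rw [mul_pow, mul_pow, pow_add]; ring
    _ ≤ exp 1 * √(k + r') * (k ^ k * r' ^ r') := by
        have : 0 ≤ 1 - α := sub_nonneg.2 hα1
        exact mul_le_mul_of_nonneg_left
          (pow_mul_pow_le_of_add_eq (by positivity) (by positivity) (by ring)) (by positivity)
    _ = exp 1 * √((k + r' : ℕ) : ℝ) * (k ^ k * r' ^ r') := by push_cast; ring

variable (α n) in
noncomputable def binomMode : ℕ := ⌊α * (n + 1)⌋₊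

theorem binomTerm_binomMode_le (hα0 : 0 < α) (hα1 : α < 1) (hn0 : 2 ≤ α * n)
    (hn1 : 2 ≤ (1 - α) * n) :
    binomTerm α n (binomMode α n) ≤ exp 1 / (π * √(α * (1 - α))) / √n := by
  set m := binomMode α n
  have hm_le : (m : ℝ) ≤ α * (n + 1) := Nat.floor_le (by positivity)
  have hm_gt : α * (n + 1) < m + 1 := Nat.lt_floor_add_one _
  have hm_lo : α * n / 2 ≤ m := by linarith
  have hmn : m < n := by
    have : (m : ℝ) < n := by linarith
    exact_mod_cast this
  have hr_lo : (1 - α) * n / 2 ≤ (n - m : ℕ) := by rw [Nat.cast_sub hmn.le]; linarith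
  have hm0 : m ≠ 0 := by
    rintro hm
    rw [hm, Nat.cast_zero] at hm_lo
    linarith
  have hsqrt : √(α * (1 - α)) * (√n * √n) / 2 ≤ √(m * (n - m : ℕ)) := by
    rw [mul_self_sqrt (Nat.cast_nonneg n)]
    calc √(α * (1 - α)) * n / 2 = √(α * n / 2 * ((1 - α) * n / 2)) := by
          rw [show α * n / 2 * ((1 - α) * n / 2) = α * (1 - α) * (n / 2) ^ 2 by ring,
            sqrt_mul' _ (sq_nonneg _), sqrt_sq (by positivity)]
          ring
      _ ≤ √(m * (n - m : ℕ)) := by gcongr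
  have hq := binomTerm_nonneg hα0.le hα1.le (n := n) m
  have hsqrt_n : 0 < √(n : ℝ) := sqrt_pos.2 (by nlinarith)
  rw [div_div, le_div_iff₀ (by positivity)]
  refine le_of_mul_le_mul_right ?_ hsqrt_n
  calc binomTerm α n m * (π * √(α * (1 - α)) * √n) * √n
      = 2 * π * (√(α * (1 - α)) * (√n * √n) / 2) * binomTerm α n m := by ring
    _ ≤ 2 * π * √(m * (n - m : ℕ)) * binomTerm α n m := by gcongr
    _ ≤ exp 1 * √n := two_mul_pi_mul_sqrt_mul_binomTerm_le hα0.le hα1.le hm0 hmn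

theorem abs_sum_filter_mod_binomTerm_sub_le (hα0 : 0 < α) (hα1 : α < 1) {a d : ℕ} (ha : a < d) :
    |∑ k ∈ (range (n + 1)).filter (· % d = a), binomTerm α n k - 1 / d|
      ≤ 2 * binomTerm α n (binomMode α n) := by
  have hN : n + 1 ≤ (n + 1) * d := Nat.le_mul_of_pos_right _ ((Nat.zero_le a).trans_lt ha)
  have hvanish : ∀ k ∈ range ((n + 1) * d), k ∉ range (n + 1) → binomTerm α n k = 0 :=
    fun k _ hk => binomTerm_eq_zero_of_lt (by simpa using hk)
  have hfilter := sum_subset (filter_subset_filter (· % d = a) (range_subset_range.2 hN))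
    fun k hk hk' =>
      hvanish k (mem_filter.1 hk).1 fun h => hk' (mem_filter.2 ⟨h, (mem_filter.1 hk).2⟩)
  have htotal := sum_subset (range_subset_range.2 hN) hvanish
  have hmode : α * (n + 1) < binomMode α n + 1 := Nat.lt_floor_add_one _
  have hmode' : (binomMode α n : ℝ) ≤ α * (n + 1) := Nat.floor_le (by positivity)
  rw [hfilter, ← sum_range_binomTerm α n, htotal]
  refine (abs_sum_filter_mod_sub_le _ ha _).trans (sum_abs_sub_succ_le_of_unimodal
    (binomTerm_nonneg hα0.le hα1.le) (fun k hk => ?_) (fun k hk => ?_) _)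
  · refine binomTerm_le_binomTerm_succ hα0.le hα1 (hmode'.trans' ?_)
    exact_mod_cast hk
  · refine binomTerm_succ_le_binomTerm hα0.le hα1 (hmode.le.trans ?_)
    exact_mod_cast Nat.succ_le_succ hk

theorem abs_sum_filter_binomTerm_sub_one_div_le_one (hα0 : 0 ≤ α) (hα1 : α ≤ 1) (p : ℕ → Prop)
    [DecidablePred p] {d : ℕ} (hd : 1 ≤ d) :
    |∑ k ∈ (range (n + 1)).filter p, binomTerm α n k - 1 / d| ≤ 1 := by
  have hS0 : 0 ≤ ∑ k ∈ (range (n + 1)).filter p, binomTerm α n k :=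
    sum_nonneg fun k _ => binomTerm_nonneg hα0 hα1 k
  have hS1 : ∑ k ∈ (range (n + 1)).filter p, binomTerm α n k ≤ 1 :=
    (sum_le_sum_of_subset_of_nonneg (filter_subset p _)
      fun k _ _ => binomTerm_nonneg hα0 hα1 k).trans_eq (sum_range_binomTerm α n)
  have hd0 : (0 : ℝ) < 1 / d := by positivity
  have hd1 : 1 / (d : ℝ) ≤ 1 := by rw [div_le_one (by positivity)]; exact_mod_cast hd
  rw [abs_sub_le_iff]
  constructor <;> linarith

end

theorem stmt_6 (α : ℝ) (hα0 : 0 < α) (hα1 : α < 1) :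
    ∃ C > 0, ∀ (n d a : ℕ), 1 ≤ d → d ≤ n → a < d →
      |(∑ k ∈ (range (n + 1)).filter (fun k => k % d = a),
          (n.choose k : ℝ) * α ^ k * (1 - α) ^ (n - k)) - 1 / d|
        ≤ C * (n : ℝ) ^ (-(1 : ℝ) / 2) := by
  have hα1' : 0 < 1 - α := sub_pos.2 hα1
  set K := exp 1 / (π * √(α * (1 - α)))
  set N₀ := max (2 / α) (2 / (1 - α))
  refine ⟨max (2 * K) √N₀, by positivity, fun n d a hd hdn ha => ?_⟩
  have hn : (0 : ℝ) < n := by exact_mod_cast hd.trans hdn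
  rw [neg_div, rpow_neg hn.le, ← sqrt_eq_rpow, ← div_eq_mul_inv]
  change |∑ k ∈ (range (n + 1)).filter (· % d = a), binomTerm α n k - 1 / d| ≤ _
  by_cases hnN₀ : N₀ ≤ n
  · have h2α : 2 ≤ α * n := by
      have := (le_max_left _ _).trans hnN₀; rw [div_le_iff₀ hα0] at this; linarith
    have h2α' : 2 ≤ (1 - α) * n := by
      have := (le_max_right _ _).trans hnN₀; rw [div_le_iff₀ hα1'] at this; linarith
    calc _ ≤ 2 * binomTerm α n (binomMode α n) := abs_sum_filter_mod_binomTerm_sub_le hα0 hα1 ha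
      _ ≤ 2 * (K / √n) := by gcongr; exact binomTerm_binomMode_le hα0 hα1 h2α h2α'
      _ ≤ max (2 * K) √N₀ / √n := by rw [← mul_div_assoc]; gcongr; exact le_max_left _ _
  · calc _ ≤ 1 := abs_sum_filter_binomTerm_sub_one_div_le_one hα0.le hα1.le _ hd
      _ ≤ √N₀ / √n := by
          rw [one_le_div (by positivity)]; exact sqrt_le_sqrt (not_le.1 hnN₀).le
      _ ≤ max (2 * K) √N₀ / √n := by gcongr; exact le_max_right _ _
end

section
/- For every positive integer n, 0 < f_b(n) ≤ 1, where f_b(n) = Σ_{d^{b1}|n} μ(d)/d^{b2}. -/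
open Finset

/-- `f_b(n) = ∑_{d^{b1} ∣ n} μ(d) / d^{b2}`. -/
def fb (b1 b2 : ℕ) (n : ℕ) : ℚ :=
  ∑ d ∈ n.divisors.filter (fun d => d ^ b1 ∣ n),
    (ArithmeticFunction.moebius d : ℚ) / (d : ℚ) ^ b2

lemma squarefree_prod_primes (s : Finset ℕ) (hs : ∀ p ∈ s, p.Prime) :
    Squarefree (∏ p ∈ s, p) := by
  classical
  induction s using Finset.induction with
  | empty => simp only [Finset.prod_empty]; exact squarefree_one
  | @insert p s hps ih =>
    rw [Finset.prod_insert hps]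
    have hp := hs p (Finset.mem_insert_self p s)
    have hsq := ih fun q hq => hs q (Finset.mem_insert_of_mem hq)
    have hcop : Nat.Coprime p (∏ q ∈ s, q) := by
      apply Nat.Coprime.prod_right
      intro q hq
      exact (Nat.coprime_primes hp (hs q (Finset.mem_insert_of_mem hq))).mpr
        (fun h => hps (h ▸ hq))
    exact (Nat.squarefree_mul hcop).mpr ⟨hp.squarefree, hsq⟩

/-- the multiplicative arithmetic function `d ↦ 1 / d ^ b2`. -/
def fpow (b2 : ℕ) : ArithmeticFunction ℚ :=
  ⟨fun d => if d = 0 then 0 else 1 / (d : ℚ) ^ b2, by simp⟩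

lemma fpow_apply (b2 d : ℕ) (hd : d ≠ 0) : fpow b2 d = 1 / (d : ℚ) ^ b2 := by
  simp [fpow, hd, ArithmeticFunction.coe_mk]

lemma fpow_mult (b2 : ℕ) : (fpow b2).IsMultiplicative := by
  constructor
  · rw [fpow_apply b2 1 one_ne_zero]; simp
  · intro x y _
    rcases eq_or_ne x 0 with rfl | hx
    · simp [fpow, ArithmeticFunction.coe_mk]
    rcases eq_or_ne y 0 with rfl | hy
    · simp [fpow, ArithmeticFunction.coe_mk]
    rw [fpow_apply b2 _ (mul_ne_zero hx hy), fpow_apply b2 x hx, fpow_apply b2 y hy]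
    push_cast
    rw [mul_pow]
    rw [div_mul_div_comm, one_mul]

theorem stmt_8 (b1 b2 : ℕ) (hb1 : 0 < b1) (hb2 : 0 < b2) (n : ℕ) (hn : 1 ≤ n) :
    0 < fb b1 b2 n ∧ fb b1 b2 n ≤ 1 := by
  classical
  have hn0 : n ≠ 0 := by omega
  set S := n.primeFactors.filter (fun p => p ^ b1 ∣ n) with hS
  have hSp : ∀ p ∈ S, p.Prime := fun p hp =>
    (Nat.mem_primeFactors.mp (Finset.mem_filter.mp hp).1).1
  set m := ∏ p ∈ S, p with hm
  have hmsq : Squarefree m := squarefree_prod_primes S hSp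
  have hm0 : m ≠ 0 := hmsq.ne_zero
  have hmf : m.primeFactors = S := Nat.primeFactors_prod hSp
  -- key identity
  have hsub : m.divisors ⊆ n.divisors.filter (fun d => d ^ b1 ∣ n) := by
    intro d hd
    rw [Nat.mem_divisors] at hd
    obtain ⟨hdm, -⟩ := hd
    have hdsq : Squarefree d := hmsq.squarefree_of_dvd hdm
    have hd0 : d ≠ 0 := hdsq.ne_zero
    have hdf : d.primeFactors ⊆ S := hmf ▸ Nat.primeFactors_mono hdm hm0
    have hdb : d ^ b1 ∣ n := by
      rw [← Nat.factorization_le_iff_dvd (pow_ne_zero _ hd0) hn0]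
      intro p
      rw [Nat.factorization_pow]
      simp only [Finsupp.smul_apply, smul_eq_mul]
      rcases Nat.eq_zero_or_pos (d.factorization p) with h0 | hpos
      · simp [h0]
      · have hp1 : d.factorization p ≤ 1 := hdsq.natFactorization_le_one p
        have hpd : p ∈ d.primeFactors := by
          rw [← Nat.support_factorization, Finsupp.mem_support_iff]
          omega
        have hpS : p ∈ S := hdf hpd
        have hpprime : p.Prime := hSp p hpS
        have : p ^ b1 ∣ n := (Finset.mem_filter.mp hpS).2
        have hble : b1 ≤ n.factorization p :=
          (Nat.Prime.pow_dvd_iff_le_factorization hpprime hn0).mp this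
        calc b1 * d.factorization p ≤ b1 * 1 := by
              exact Nat.mul_le_mul_left _ hp1
          _ = b1 := Nat.mul_one b1
          _ ≤ n.factorization p := hble
    refine Finset.mem_filter.mpr ⟨Nat.mem_divisors.mpr ⟨?_, hn0⟩, hdb⟩
    exact dvd_trans (dvd_pow_self d (by omega)) hdb
  have hkey : fb b1 b2 n = ∑ d ∈ m.divisors,
      (ArithmeticFunction.moebius d : ℚ) / (d : ℚ) ^ b2 := by
    rw [fb]
    symm
    apply Finset.sum_subset hsub
    intro d hd hdm
    have hd' := Finset.mem_filter.mp hd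
    have hd0 : d ≠ 0 := Nat.pos_of_mem_divisors hd'.1 |>.ne'
    have hdn : d ∣ n := (Nat.mem_divisors.mp hd'.1).1
    by_cases hdsq : Squarefree d
    · exfalso
      apply hdm
      rw [Nat.mem_divisors]
      refine ⟨?_, hm0⟩
      have hdf : d.primeFactors ⊆ S := by
        intro p hp
        obtain ⟨hpp, hpd, -⟩ := Nat.mem_primeFactors.mp hp
        refine Finset.mem_filter.mpr ⟨Nat.mem_primeFactors.mpr ⟨hpp, hpd.trans hdn, hn0⟩, ?_⟩
        exact dvd_trans (pow_dvd_pow_of_dvd hpd b1) hd'.2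
      calc d = ∏ p ∈ d.primeFactors, p := (Nat.prod_primeFactors_of_squarefree hdsq).symm
        _ ∣ ∏ p ∈ S, p := Finset.prod_dvd_prod_of_subset _ _ _ hdf
    · rw [ArithmeticFunction.moebius_eq_zero_of_not_squarefree hdsq]
      simp
  -- product formula
  have hprod : (∑ d ∈ m.divisors, (ArithmeticFunction.moebius d : ℚ) * fpow b2 d) =
      ∏ p ∈ S, (1 - fpow b2 p) := by
    rw [← (fpow_mult b2).prodPrimeFactors_one_sub_of_squarefree (fpow b2) hmsq, hmf]
  have hsum_eq : fb b1 b2 n = ∏ p ∈ S, (1 - fpow b2 p) := by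
    rw [hkey, ← hprod]
    apply Finset.sum_congr rfl
    intro d hd
    have hd0 : d ≠ 0 := (Nat.pos_of_mem_divisors hd).ne'
    rw [fpow_apply b2 d hd0, div_eq_mul_one_div]
  have hfac : ∀ p ∈ S, 0 < 1 - fpow b2 p ∧ 1 - fpow b2 p ≤ 1 := by
    intro p hp
    have hpp := hSp p hp
    have hp2 : (2 : ℚ) ≤ (p : ℚ) := by exact_mod_cast hpp.two_le
    have hp0 : (0 : ℚ) < (p : ℚ) ^ b2 := by positivity
    have hp1 : (1 : ℚ) < (p : ℚ) ^ b2 := by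
      calc (1:ℚ) < 2 := one_lt_two
        _ ≤ (p : ℚ) := hp2
        _ = (p : ℚ) ^ 1 := (pow_one _).symm
        _ ≤ (p : ℚ) ^ b2 := pow_le_pow_right₀ (by linarith) hb2
    rw [fpow_apply b2 p hpp.ne_zero]
    constructor
    · rw [sub_pos, div_lt_one hp0]; linarith
    · have : 0 < 1 / (p:ℚ) ^ b2 := by positivity
      linarith
  rw [hsum_eq]
  constructor
  · exact Finset.prod_pos fun p hp => (hfac p hp).1
  · exact Finset.prod_le_one (fun p hp => (hfac p hp).1.le) (fun p hp => (hfac p hp).2)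
end

section
/- Suppose b1 ≤ b2. Then for x ≥ 2, Σ_{n ≤ x} f_b(n) = x·Π_p (1 − p^{−(b1+b2)}) + O(log x), where the product is over all primes and the implied constant depends only on b. -/
/-!
Swapping the order of summation gives
`∑_{n ≤ x} f_b(n) = ∑_{d ≤ x} μ(d) d^{-b2} ⌊x / d^{b1}⌋`.
Replacing `⌊x / d^{b1}⌋` by `x / d^{b1}` costs at most `∑_{d ≤ x} 1/d ≤ 1 + log x`, and leaves
`x ∑_{d ≤ x} μ(d) / d^{b1+b2}`, which differs from `x ∑_d μ(d) / d^{b1+b2}` by at most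
`x ∑_{d > x} 1/d² = O(1)`. Finally `∑_d μ(d) / d^k = ∏_p (1 - p^{-k})` is the Euler product of
the multiplicative function `μ(d) / d^k`.
-/

open Finset Real

open ArithmeticFunction
open scoped ArithmeticFunction.Moebius

lemma abs_moebius_div_pow_le {m k : ℕ} (hmk : m ≤ k) (d : ℕ) :
    |(μ d : ℝ) / (d : ℝ) ^ k| ≤ ((d : ℝ) ^ m)⁻¹ := by
  rcases Nat.eq_zero_or_pos d with rfl | hd
  · simp
  rw [abs_div, abs_of_pos (pow_pos (Nat.cast_pos.mpr hd : (0 : ℝ) < d) k), ← one_div]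
  calc |(μ d : ℝ)| / (d : ℝ) ^ k ≤ 1 / (d : ℝ) ^ k := by
        gcongr
        exact_mod_cast abs_moebius_le_one
    _ ≤ 1 / (d : ℝ) ^ m := by gcongr; exact_mod_cast hd

lemma summable_norm_of_abs_le_inv_sq {f : ℕ → ℝ} (hf : ∀ d, |f d| ≤ ((d : ℝ) ^ 2)⁻¹) :
    Summable fun d => ‖f d‖ :=
  (Real.summable_nat_pow_inv.mpr one_lt_two).of_nonneg_of_le (fun _ => norm_nonneg _) hf

theorem tprod_one_sub_inv_pow_eq_tsum_moebius {k : ℕ} (hk : 2 ≤ k) :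
    ∏' p : Nat.Primes, (1 - 1 / (p : ℝ) ^ k) = ∑' d : ℕ, (μ d : ℝ) / (d : ℝ) ^ k := by
  have hmul : ∀ {m n : ℕ}, m.Coprime n →
      (μ (m * n) : ℝ) / ((m * n : ℕ) : ℝ) ^ k =
        (μ m : ℝ) / (m : ℝ) ^ k * ((μ n : ℝ) / (n : ℝ) ^ k) := by
    intro m n hmn
    rw [isMultiplicative_moebius.map_mul_of_coprime hmn]
    push_cast
    ring
  rw [← EulerProduct.eulerProduct_tprod (by simp) hmul
    (summable_norm_of_abs_le_inv_sq (abs_moebius_div_pow_le hk)) (by simp)]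
  refine tprod_congr fun p => ?_
  rw [tsum_eq_sum (s := {0, 1}), sum_pair zero_ne_one]
  · simp [moebius_apply_prime p.prop]
    ring
  · intro e he
    simp only [mem_insert, mem_singleton, not_or] at he
    simp [moebius_apply_prime_pow p.prop he.1, he.2]

lemma abs_tsum_sub_sum_Icc_le {f : ℕ → ℝ} (hf : ∀ d, |f d| ≤ ((d : ℝ) ^ 2)⁻¹) {N : ℕ}
    (hN : N ≠ 0) : |∑' d, f d - ∑ d ∈ Icc 1 N, f d| ≤ (N : ℝ)⁻¹ := by
  have hsum := summable_norm_of_abs_le_inv_sq hf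
  have hf0 : f 0 = 0 := abs_nonpos_iff.mp (by simpa using hf 0)
  have hIcc : ∑ d ∈ Icc 1 N, f d = ∑ d ∈ range (N + 1), f d := by
    rw [range_eq_Ico, sum_eq_sum_Ico_succ_bot N.succ_pos, hf0, zero_add, zero_add,
      Nat.succ_eq_add_one, Ico_add_one_right_eq_Icc]
  rw [hIcc, ← hsum.of_norm.sum_add_tsum_nat_add (N + 1), add_sub_cancel_left,
    ← Real.norm_eq_abs]
  refine (norm_tsum_le_tsum_norm
    ((summable_nat_add_iff (f := fun d => ‖f d‖) (N + 1)).mpr hsum)).trans ?_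
  refine Real.tsum_le_of_sum_range_le (fun _ => norm_nonneg _) fun M => ?_
  simp only [Real.norm_eq_abs]
  calc ∑ i ∈ range M, |f (i + (N + 1))| ≤ ∑ i ∈ range M, (((i + (N + 1) : ℕ) : ℝ) ^ 2)⁻¹ :=
        sum_le_sum fun i _ => hf _
    _ = ∑ d ∈ Ioc N (M + N), ((d : ℝ) ^ 2)⁻¹ := by
        rw [range_eq_Ico, sum_Ico_add' (fun d : ℕ => ((d : ℝ) ^ 2)⁻¹), zero_add, ← add_assoc,
          Ico_add_one_add_one_eq_Ioc]
    _ ≤ (N : ℝ)⁻¹ - ((M + N : ℕ) : ℝ)⁻¹ := sum_Ioc_inv_sq_le_sub hN (by omega)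
    _ ≤ (N : ℝ)⁻¹ := sub_le_self _ (by positivity)

lemma abs_floor_div_sub_div_le_one {x : ℝ} (hx : 0 ≤ x) (m : ℕ) :
    |((⌊x⌋₊ / m : ℕ) : ℝ) - x / m| ≤ 1 := by
  rw [← Nat.floor_div_natCast, abs_le]
  have := Nat.floor_le (div_nonneg hx m.cast_nonneg)
  have := Nat.sub_one_lt_floor (x / m)
  constructor <;> linarith

lemma sum_Icc_fb (b2 : ℕ) {b1 : ℕ} (hb1 : b1 ≠ 0) (N : ℕ) :
    ∑ n ∈ Icc 1 N, fb b1 b2 n =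
      ∑ d ∈ Icc 1 N, ((N / d ^ b1 : ℕ) : ℚ) * ((μ d : ℚ) / (d : ℚ) ^ b2) := by
  unfold fb
  rw [sum_comm' (t' := Icc 1 N) (s' := fun d => (Icc 1 N).filter (d ^ b1 ∣ ·))]
  · refine sum_congr rfl fun d _ => ?_
    rw [sum_const, nsmul_eq_mul, ← Nat.Ioc_filter_dvd_card_eq_div]
    rfl
  · intro n d
    simp only [mem_Icc, mem_filter, Nat.mem_divisors]
    constructor
    · rintro ⟨⟨hn1, hnN⟩, ⟨hdn, -⟩, hdb⟩
      have hdn_le := Nat.le_of_dvd hn1 hdn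
      exact ⟨⟨⟨hn1, hnN⟩, hdb⟩, Nat.pos_of_dvd_of_pos hdn hn1, by omega⟩
    · rintro ⟨⟨hn, hdb⟩, -⟩
      exact ⟨hn, ⟨(dvd_pow_self d hb1).trans hdb, by omega⟩, hdb⟩

lemma abs_sum_fb_sub_le {b1 b2 : ℕ} (hb1 : b1 ≠ 0) (hb2 : b2 ≠ 0) {x : ℝ} (hx : 1 ≤ x) :
    |∑ n ∈ Icc 1 ⌊x⌋₊, (fb b1 b2 n : ℝ) -
        x * ∑ d ∈ Icc 1 ⌊x⌋₊, (μ d : ℝ) / (d : ℝ) ^ (b1 + b2)| ≤ 1 + Real.log x := by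
  set N := ⌊x⌋₊
  have hN : 1 ≤ N := (Nat.one_le_floor_iff x).mpr hx
  have hsplit :
      ∑ n ∈ Icc 1 N, (fb b1 b2 n : ℝ) - x * ∑ d ∈ Icc 1 N, (μ d : ℝ) / (d : ℝ) ^ (b1 + b2) =
        ∑ d ∈ Icc 1 N, (((N / d ^ b1 : ℕ) : ℝ) - x / ((d ^ b1 : ℕ) : ℝ)) *
            ((μ d : ℝ) / (d : ℝ) ^ b2) := by
    rw [← Rat.cast_sum, sum_Icc_fb b2 hb1]
    push_cast
    rw [mul_sum, ← sum_sub_distrib]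
    refine sum_congr rfl fun d _ => ?_
    ring
  calc _ ≤ ∑ d ∈ Icc 1 N, ((d : ℝ) ^ 1)⁻¹ := by
        rw [hsplit]
        refine (abs_sum_le_sum_abs _ _).trans (sum_le_sum fun d _ => ?_)
        rw [abs_mul, ← one_mul ((d : ℝ) ^ 1)⁻¹]
        exact mul_le_mul (abs_floor_div_sub_div_le_one (by linarith) _)
          (abs_moebius_div_pow_le (by omega) d) (abs_nonneg _) zero_le_one
    _ = harmonic N := by simp [harmonic_eq_sum_Icc]
    _ ≤ 1 + Real.log N := harmonic_le_one_add_log N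
    _ ≤ 1 + Real.log x := by
        gcongr
        exact Nat.floor_le (by linarith)

theorem stmt_9_general (b1 b2 : ℕ) (hb1 : 0 < b1) (hb2 : 0 < b2) :
    ∃ C > 0, ∀ x : ℝ, 2 ≤ x →
      |(∑ n ∈ Icc 1 ⌊x⌋₊, (fb b1 b2 n : ℝ)) -
          x * ∏' p : Nat.Primes, (1 - 1 / (p : ℝ) ^ (b1 + b2))|
        ≤ C * Real.log x := by
  refine ⟨6, by norm_num, fun x hx => ?_⟩
  have hN2 : 2 ≤ ⌊x⌋₊ := Nat.le_floor (by exact_mod_cast hx)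
  have hN : (2 : ℝ) ≤ ⌊x⌋₊ := by exact_mod_cast hN2
  have hxN : x ≤ 2 * ⌊x⌋₊ := by linarith [Nat.lt_floor_add_one x]
  have hlog : 0.6 < Real.log x :=
    (log_two_gt_d9.trans_le' (by norm_num)).trans_le (log_le_log two_pos hx)
  have hmain := abs_sum_fb_sub_le hb1.ne' hb2.ne' (one_le_two.trans hx)
  have htail := abs_tsum_sub_sum_Icc_le (abs_moebius_div_pow_le (show 2 ≤ b1 + b2 by omega))
    (N := ⌊x⌋₊) (by omega)
  rw [tprod_one_sub_inv_pow_eq_tsum_moebius (by omega)]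
  set S := ∑ d ∈ Icc 1 ⌊x⌋₊, (μ d : ℝ) / (d : ℝ) ^ (b1 + b2)
  set K := ∑' d : ℕ, (μ d : ℝ) / (d : ℝ) ^ (b1 + b2)
  have hxtail : |x * (K - S)| ≤ 2 := by
    rw [abs_mul, abs_of_pos (by linarith)]
    calc x * |K - S| ≤ x * (⌊x⌋₊ : ℝ)⁻¹ := by gcongr
      _ ≤ 2 := by rw [← div_eq_mul_inv, div_le_iff₀ (by linarith)]; exact hxN
  calc _ = |(∑ n ∈ Icc 1 ⌊x⌋₊, (fb b1 b2 n : ℝ) - x * S) - x * (K - S)| := by ring_nf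
    _ ≤ (1 + Real.log x) + 2 := (abs_sub _ _).trans (add_le_add hmain hxtail)
    _ ≤ 6 * Real.log x := by linarith

theorem stmt_9 (b1 b2 : ℕ) (hb1 : 0 < b1) (hb2 : 0 < b2) (hb : b1 ≤ b2) :
    ∃ C > 0, ∀ x : ℝ, 2 ≤ x →
      |(∑ n ∈ Icc 1 ⌊x⌋₊, (fb b1 b2 n : ℝ)) -
          x * ∏' p : Nat.Primes, (1 - 1 / (p : ℝ) ^ (b1 + b2))|
        ≤ C * Real.log x :=
  stmt_9_general b1 b2 hb1 hb2
end

section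
/- The sequence r ↦ C_{b,r} = Π_p (1 − p^{−b1} + p^{−b1}(1 − p^{−b2})^r) is decreasing in r and converges to 1/ζ(b1) = Π_p(1 − p^{−b1}) as r → ∞, provided b1 ≥ 2. -/
/-!
Every factor `1 - x + x (1 - y)^r` with `x = p^{-b₁}`, `y = p^{-b₂}` lies in `[1 - x, 1]`, decreases
in `r` and tends to `1 - x`. On that interval `|log| ≤ 2x`, and `∑ₚ p^{-b₁}` converges, so the
logarithms of all the products are dominated by one summable sequence: monotonicity and the limit
pass through `∏' = exp ∑' log` by comparison and dominated convergence. The value of the limit is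
the inverted Euler product of `ζ(b₁)`.
-/

open Filter Topology Real Set

theorem abs_log_le_two_mul_of_mem_Icc {x z : ℝ} (hx : x ≤ 1 / 2) (hz : z ∈ Icc (1 - x) 1) :
    |log z| ≤ 2 * x := by
  obtain ⟨hxz, hz1⟩ := hz
  have hz0 : 0 < z := by linarith
  have hinv : z⁻¹ ≤ 1 + 2 * x := by
    rw [inv_le_iff_one_le_mul₀ hz0]
    nlinarith
  rw [abs_of_nonpos (log_nonpos hz0.le hz1)]
  linarith [one_sub_inv_le_log_of_pos hz0]

section LogProducts

variable {ι : Type*}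

theorem summable_log_of_mem_Icc {f x : ι → ℝ} (hx : Summable x) (hx2 : ∀ i, x i ≤ 1 / 2)
    (hf : ∀ i, f i ∈ Icc (1 - x i) 1) : Summable fun i => log (f i) :=
  (hx.mul_left 2).of_norm_bounded fun i => abs_log_le_two_mul_of_mem_Icc (hx2 i) (hf i)

theorem tprod_le_tprod_of_summable_log {f g : ι → ℝ} (hf0 : ∀ i, 0 < f i) (hfg : ∀ i, f i ≤ g i)
    (hf : Summable fun i => log (f i)) (hg : Summable fun i => log (g i)) :
    ∏' i, f i ≤ ∏' i, g i := by
  rw [← rexp_tsum_eq_tprod hf0 hf, ← rexp_tsum_eq_tprod (fun i => (hf0 i).trans_le (hfg i)) hg,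
    exp_le_exp]
  exact hf.tsum_le_tsum (fun i => log_le_log (hf0 i) (hfg i)) hg

theorem tendsto_tprod_of_dominated_log {α : Type*} {l : Filter α} [l.NeBot] {f : α → ι → ℝ}
    {g bound : ι → ℝ} (hbound : Summable bound) (hf0 : ∀ a i, 0 < f a i) (hg0 : ∀ i, 0 < g i)
    (hlim : ∀ i, Tendsto (f · i) l (𝓝 (g i))) (hle : ∀ a i, |log (f a i)| ≤ bound i) :
    Tendsto (fun a => ∏' i, f a i) l (𝓝 (∏' i, g i)) := by
  have hlog_lim (i : ι) : Tendsto (fun a => log (f a i)) l (𝓝 (log (g i))) :=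
    ((continuousAt_log (hg0 i).ne').tendsto).comp (hlim i)
  have hg_le (i : ι) : |log (g i)| ≤ bound i := le_of_tendsto' (hlog_lim i).abs (hle · i)
  have hsum : Tendsto (fun a => ∑' i, log (f a i)) l (𝓝 (∑' i, log (g i))) :=
    tendsto_tsum_of_dominated_convergence hbound hlog_lim (.of_forall hle)
  rw [← rexp_tsum_eq_tprod hg0 (hbound.of_norm_bounded hg_le)]
  refine (continuous_exp.tendsto _ |>.comp hsum).congr fun a => ?_
  exact rexp_tsum_eq_tprod (hf0 a) (hbound.of_norm_bounded (hle a))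

end LogProducts

section Interpolation

theorem one_sub_add_mul_pow_mem_Icc {x y : ℝ} (hx : 0 ≤ x) (hy0 : 0 ≤ y) (hy1 : y ≤ 1) (r : ℕ) :
    1 - x + x * (1 - y) ^ r ∈ Icc (1 - x) 1 := by
  have hpow0 : 0 ≤ (1 - y) ^ r := pow_nonneg (by linarith) r
  have hpow1 : (1 - y) ^ r ≤ 1 := pow_le_one₀ (by linarith) (by linarith)
  constructor <;> nlinarith

theorem antitone_one_sub_add_mul_pow {x y : ℝ} (hx : 0 ≤ x) (hy0 : 0 ≤ y) (hy1 : y ≤ 1) :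
    Antitone fun r : ℕ => 1 - x + x * (1 - y) ^ r := fun _ _ hrs => by
  have := pow_le_pow_of_le_one (by linarith : 0 ≤ 1 - y) (by linarith) hrs
  dsimp only
  nlinarith

theorem tendsto_one_sub_add_mul_pow {x y : ℝ} (hy0 : 0 < y) (hy1 : y ≤ 1) :
    Tendsto (fun r : ℕ => 1 - x + x * (1 - y) ^ r) atTop (𝓝 (1 - x)) := by
  have hpow := tendsto_pow_atTop_nhds_zero_of_lt_one (by linarith : 0 ≤ 1 - y) (by linarith)
  simpa using (hpow.const_mul x).const_add (1 - x)

variable {ι : Type*} {x y : ι → ℝ}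

theorem antitone_tprod_one_sub_add_mul_pow (hx : Summable x) (hx0 : ∀ i, 0 ≤ x i)
    (hx2 : ∀ i, x i ≤ 1 / 2) (hy0 : ∀ i, 0 ≤ y i) (hy1 : ∀ i, y i ≤ 1) :
    Antitone fun r : ℕ => ∏' i, (1 - x i + x i * (1 - y i) ^ r) := fun r s hrs => by
  have hmem (r : ℕ) (i : ι) := one_sub_add_mul_pow_mem_Icc (hx0 i) (hy0 i) (hy1 i) r
  exact tprod_le_tprod_of_summable_log (fun i => by linarith [hx2 i, (hmem s i).1])
    (fun i => antitone_one_sub_add_mul_pow (hx0 i) (hy0 i) (hy1 i) hrs)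
    (summable_log_of_mem_Icc hx hx2 (hmem s)) (summable_log_of_mem_Icc hx hx2 (hmem r))

theorem tendsto_tprod_one_sub_add_mul_pow (hx : Summable x) (hx0 : ∀ i, 0 ≤ x i)
    (hx2 : ∀ i, x i ≤ 1 / 2) (hy0 : ∀ i, 0 < y i) (hy1 : ∀ i, y i ≤ 1) :
    Tendsto (fun r : ℕ => ∏' i, (1 - x i + x i * (1 - y i) ^ r)) atTop
      (𝓝 (∏' i, (1 - x i))) := by
  have hmem (r : ℕ) (i : ι) := one_sub_add_mul_pow_mem_Icc (hx0 i) (hy0 i).le (hy1 i) r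
  exact tendsto_tprod_of_dominated_log (hx.mul_left 2)
    (fun r i => by linarith [hx2 i, (hmem r i).1]) (fun i => by linarith [hx2 i])
    (fun i => tendsto_one_sub_add_mul_pow (hy0 i) (hy1 i))
    (fun r i => abs_log_le_two_mul_of_mem_Icc (hx2 i) (hmem r i))

end Interpolation

section PrimePowers

theorem summable_one_div_prime_pow {b : ℕ} (hb : 1 < b) :
    Summable fun p : Nat.Primes => 1 / (p : ℝ) ^ b :=
  (Real.summable_one_div_nat_pow.mpr hb).comp_injective Nat.Primes.coe_nat_injective

theorem one_div_prime_pow_le_half {b : ℕ} (hb : 1 ≤ b) (p : Nat.Primes) :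
    1 / (p : ℝ) ^ b ≤ 1 / 2 := by
  have hp : (2 : ℝ) ≤ p := mod_cast p.prop.two_le
  gcongr
  calc (2 : ℝ) ≤ p := hp
    _ ≤ (p : ℝ) ^ b := le_self_pow₀ (by linarith) (by omega)

theorem one_div_prime_pow_le_one (b : ℕ) (p : Nat.Primes) : 1 / (p : ℝ) ^ b ≤ 1 :=
  div_le_one_of_le₀ (one_le_pow₀ (mod_cast p.prop.one_lt.le)) (by positivity)

theorem ofReal_tprod_one_sub_one_div_prime_pow {b : ℕ} (hb : 1 < b) :
    ((∏' p : Nat.Primes, (1 - 1 / (p : ℝ) ^ b) : ℝ) : ℂ) = (riemannZeta b)⁻¹ := by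
  have hs : 1 < (b : ℂ).re := mod_cast hb
  have hζ : HasProd (fun p : Nat.Primes => 1 - (p : ℂ) ^ (-(b : ℂ))) (riemannZeta b)⁻¹ := by
    simpa using (riemannZeta_eulerProduct_hasProd hs).inv₀ (riemannZeta_ne_zero_of_one_lt_re hs)
  have hmem (p : Nat.Primes) : 1 - 1 / (p : ℝ) ^ b ∈ Icc (1 - 1 / (p : ℝ) ^ b) 1 :=
    ⟨le_rfl, by simp only [sub_le_self_iff]; positivity⟩
  have hR : Multipliable fun p : Nat.Primes => 1 - 1 / (p : ℝ) ^ b :=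
    Real.multipliable_of_summable_log
      (fun p => by linarith [one_div_prime_pow_le_half hb.le p])
      (summable_log_of_mem_Icc (summable_one_div_prime_pow hb)
        (one_div_prime_pow_le_half hb.le) hmem)
  refine (hR.hasProd.map Complex.ofRealHom Complex.continuous_ofReal).unique
    (hζ.congr_fun fun p => ?_)
  simp [Complex.cpow_neg]

end PrimePowers

theorem stmt_14_general (b1 b2 : ℕ) (hb1 : 2 ≤ b1) :
    (∀ r : ℕ, 1 ≤ r →
      (∏' p : Nat.Primes,
          (1 - 1 / (p : ℝ) ^ b1 + 1 / (p : ℝ) ^ b1 * (1 - 1 / (p : ℝ) ^ b2) ^ (r + 1)))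
        ≤ ∏' p : Nat.Primes,
            (1 - 1 / (p : ℝ) ^ b1 + 1 / (p : ℝ) ^ b1 * (1 - 1 / (p : ℝ) ^ b2) ^ r)) ∧
    Tendsto (fun r : ℕ => ∏' p : Nat.Primes,
        (1 - 1 / (p : ℝ) ^ b1 + 1 / (p : ℝ) ^ b1 * (1 - 1 / (p : ℝ) ^ b2) ^ r))
      atTop (nhds (∏' p : Nat.Primes, (1 - 1 / (p : ℝ) ^ b1))) ∧
    ((∏' p : Nat.Primes, (1 - 1 / (p : ℝ) ^ b1) : ℝ) : ℂ) = (riemannZeta b1)⁻¹ := by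
  have hx := summable_one_div_prime_pow hb1
  have hx2 := one_div_prime_pow_le_half (b := b1) (by omega)
  have hy1 := one_div_prime_pow_le_one b2
  refine ⟨fun r _ => ?_, ?_, ofReal_tprod_one_sub_one_div_prime_pow hb1⟩
  · exact antitone_tprod_one_sub_add_mul_pow hx (fun _ => by positivity) hx2
      (fun _ => by positivity) hy1 r.le_succ
  · exact tendsto_tprod_one_sub_add_mul_pow hx (fun _ => by positivity) hx2
      (fun p => one_div_pos.mpr (pow_pos (mod_cast p.prop.pos) _)) hy1

theorem stmt_14 (b1 b2 : ℕ) (hb1 : 2 ≤ b1) (hb : b1 ≤ b2) :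
    (∀ r : ℕ, 1 ≤ r →
      (∏' p : Nat.Primes,
          (1 - 1 / (p : ℝ) ^ b1 + 1 / (p : ℝ) ^ b1 * (1 - 1 / (p : ℝ) ^ b2) ^ (r + 1)))
        ≤ ∏' p : Nat.Primes,
            (1 - 1 / (p : ℝ) ^ b1 + 1 / (p : ℝ) ^ b1 * (1 - 1 / (p : ℝ) ^ b2) ^ r)) ∧
    Tendsto (fun r : ℕ => ∏' p : Nat.Primes,
        (1 - 1 / (p : ℝ) ^ b1 + 1 / (p : ℝ) ^ b1 * (1 - 1 / (p : ℝ) ^ b2) ^ r))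
      atTop (nhds (∏' p : Nat.Primes, (1 - 1 / (p : ℝ) ^ b1))) ∧
    ((∏' p : Nat.Primes, (1 - 1 / (p : ℝ) ^ b1) : ℝ) : ℂ) = (riemannZeta b1)⁻¹ :=
  stmt_14_general b1 b2 hb1
end

section
/- For 0 < α < 1 and n > 1, the probability that the point P_n = (k, n−k) of an α-random walk (where k is the number of horizontal steps among the first n) satisfies gcd_b(k, n−k) = 1 equals Σ_{0 ≤ k ≤ n, gcd_b(n, n−k)=1} C(n,k) α^k (1−α)^{n−k}, and this equals f_b(n) + O_α(n^{−1/2+ε}) for any ε > 0, where f_b(n) = Σ_{d^{b1}|n} μ(d)/d^{b2}. -/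
/-!
Möbius inversion over the divisors of `gcd_b(n, n - k)` writes the probability as
`∑_{d^{b1} ∣ n} μ(d) P(d^{b2} ∣ n - k)`. For the binomial variable `n - k` the roots-of-unity
filter gives `m P(m ∣ n - k) - 1 = ∑_{0 < j < m} (α + (1 - α) ζ^j)^n` with `ζ = e^{2πi/m}`, and
`|α + (1 - α) ζ^j|^n ≤ exp(-8α(1 - α) n ‖j/m‖²)`, where `‖j/m‖` is the distance to the nearest
integer. Comparing with a Gaussian integral, `P(m ∣ n - k) = 1/m + O(n^{-1/2})` uniformly in `m`,
and the divisor bound `τ(n) = O(n^ε)` controls the number of terms.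
-/

open Finset Real
open scoped Classical

open ArithmeticFunction
open scoped ArithmeticFunction.Moebius

theorem Nat.lcm_pow_dvd {u v x b : ℕ} (hu : u ^ b ∣ x) (hv : v ^ b ∣ x) :
    Nat.lcm u v ^ b ∣ x := by
  rcases eq_or_ne x 0 with rfl | hx
  · exact dvd_zero _
  rcases eq_or_ne b 0 with rfl | hb
  · simp
  have hu0 : u ≠ 0 := by rintro rfl; simp [zero_pow hb, hx] at hu
  have hv0 : v ≠ 0 := by rintro rfl; simp [zero_pow hb, hx] at hv
  rw [← Nat.factorization_le_iff_dvd (pow_ne_zero _ hu0) hx, Nat.factorization_pow] at hu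
  rw [← Nat.factorization_le_iff_dvd (pow_ne_zero _ hv0) hx, Nat.factorization_pow] at hv
  rw [← Nat.factorization_le_iff_dvd (pow_ne_zero _ (Nat.lcm_ne_zero hu0 hv0)) hx,
    Nat.factorization_pow, Nat.factorization_lcm hu0 hv0]
  intro p
  simp only [Finsupp.smul_apply, Finsupp.sup_apply, smul_eq_mul, ← Nat.mul_max_mul_left]
  exact max_le (hu p) (hv p)

theorem sum_divisors_moebius (n : ℕ) : ∑ d ∈ n.divisors, (μ d : ℤ) = if n = 1 then 1 else 0 := by
  rw [← one_apply, ← moebius_mul_coe_zeta, coe_mul_zeta_apply]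

section Gcdb

variable {b1 b2 : ℕ}

theorem gcdb_add_self_left (hb : b1 ≤ b2) (m n : ℤ) :
    gcdb b1 b2 (m + n) n = gcdb b1 b2 m n := by
  unfold gcdb
  congr! 3 with d
  refine and_congr_right fun _ => and_congr_left fun hn => ?_
  exact dvd_add_left ((pow_dvd_pow (d : ℤ) hb).trans hn)

theorem Int.natCast_pow_dvd_iff {d b : ℕ} {m : ℤ} : (d : ℤ) ^ b ∣ m ↔ d ^ b ∣ m.natAbs := by
  rw [← Nat.cast_pow, Int.natCast_dvd]

/-- The defining set is bounded by `|m|` and closed under `lcm`, so its supremum is a multiple of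
each of its elements. -/
theorem dvd_gcdb_iff (hb1 : b1 ≠ 0) {m : ℤ} (hm : m ≠ 0) (n : ℤ) {d : ℕ} :
    d ∣ gcdb b1 b2 m n ↔ (d : ℤ) ^ b1 ∣ m ∧ (d : ℤ) ^ b2 ∣ n := by
  set S := {d : ℕ | 0 < d ∧ (d : ℤ) ^ b1 ∣ m ∧ (d : ℤ) ^ b2 ∣ n}
  have hbdd : BddAbove S := ⟨m.natAbs, fun d ⟨_, hdm, _⟩ =>
    (Nat.le_self_pow hb1 d).trans
      (Nat.le_of_dvd (Int.natAbs_pos.2 hm) (Int.natCast_pow_dvd_iff.1 hdm))⟩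
  obtain ⟨hg0, hgm, hgn⟩ : gcdb b1 b2 m n ∈ S :=
    Nat.sSup_mem ⟨1, one_pos, by simp, by simp⟩ hbdd
  set g := gcdb b1 b2 m n
  constructor
  · intro hdg
    have hdg : (d : ℤ) ∣ g := Int.natCast_dvd_natCast.2 hdg
    exact ⟨(pow_dvd_pow_of_dvd hdg b1).trans hgm, (pow_dvd_pow_of_dvd hdg b2).trans hgn⟩
  · rintro ⟨hdm, hdn⟩
    have hd0 : d ≠ 0 := by rintro rfl; simp [zero_pow hb1, hm] at hdm
    have hlcm : Nat.lcm d g ∈ S := by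
      rw [Int.natCast_pow_dvd_iff] at hdm hdn hgm hgn
      exact ⟨Nat.pos_of_ne_zero (Nat.lcm_ne_zero hd0 hg0.ne'),
        Int.natCast_pow_dvd_iff.2 (Nat.lcm_pow_dvd hdm hgm),
        Int.natCast_pow_dvd_iff.2 (Nat.lcm_pow_dvd hdn hgn)⟩
    have : Nat.lcm d g = g := le_antisymm (le_csSup hbdd hlcm)
      (Nat.le_of_dvd hlcm.1 (Nat.dvd_lcm_right d g))
    exact this ▸ Nat.dvd_lcm_left d g

theorem divisors_gcdb (hb1 : b1 ≠ 0) {m : ℤ} (hm : m ≠ 0) (n : ℤ) :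
    (gcdb b1 b2 m n).divisors =
      (m.natAbs.divisors.filter fun d : ℕ => (d : ℤ) ^ b1 ∣ m ∧ (d : ℤ) ^ b2 ∣ n) := by
  have hg : gcdb b1 b2 m n ≠ 0 := fun h => by
    simpa [zero_pow hb1, hm] using (dvd_gcdb_iff (b2 := b2) hb1 hm n (d := 0)).1 (h ▸ dvd_rfl)
  ext d
  rw [Nat.mem_divisors, mem_filter, Nat.mem_divisors, dvd_gcdb_iff hb1 hm]
  refine ⟨fun ⟨h, _⟩ => ⟨⟨?_, Int.natAbs_ne_zero.2 hm⟩, h⟩, fun ⟨_, h⟩ => ⟨h, hg⟩⟩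
  exact (dvd_pow_self d hb1).trans (Int.natCast_pow_dvd_iff.1 h.1)

theorem sum_filter_gcdb_eq_one {ι R : Type*} [CommRing R] (hb1 : b1 ≠ 0) {m : ℤ}
    (hm : m ≠ 0) (r : ι → ℤ) (s : Finset ι) (w : ι → R) :
    ∑ i ∈ s with gcdb b1 b2 m (r i) = 1, w i =
      ∑ d ∈ m.natAbs.divisors with ((d : ℕ) : ℤ) ^ b1 ∣ m,
        (μ d : R) * ∑ i ∈ s with (d : ℤ) ^ b2 ∣ r i, w i := by
  have hind : ∀ i, (if gcdb b1 b2 m (r i) = 1 then w i else 0) =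
      ∑ d ∈ m.natAbs.divisors with ((d : ℕ) : ℤ) ^ b1 ∣ m,
        if (d : ℤ) ^ b2 ∣ r i then (μ d : R) * w i else 0 := fun i => by
    rw [← sum_filter, filter_filter, ← divisors_gcdb hb1 hm, ← sum_mul]
    have := congrArg (Int.cast (R := R)) (sum_divisors_moebius (gcdb b1 b2 m (r i)))
    push_cast at this
    rw [this, ite_mul, one_mul, zero_mul]
  simp_rw [sum_filter (s := s), hind, mul_sum]
  rw [sum_comm]
  simp_rw [mul_ite, mul_zero]

theorem sum_range_filter_gcdb_sub_eq_one {R : Type*} [CommRing R] (hb1 : b1 ≠ 0)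
    {n : ℕ} (hn : n ≠ 0) (w : ℕ → R) :
    ∑ k ∈ range (n + 1) with gcdb b1 b2 n (n - ((k : ℕ) : ℤ)) = 1, w k =
      ∑ d ∈ n.divisors with d ^ b1 ∣ n,
        (μ d : R) * ∑ k ∈ range (n + 1) with d ^ b2 ∣ n - k, w k := by
  rw [sum_filter_gcdb_eq_one hb1 (Int.natCast_ne_zero.2 hn), Int.natAbs_natCast]
  refine sum_congr (filter_congr fun d _ => by norm_cast) fun d _ => ?_
  congr 2
  refine filter_congr fun k hk => ?_
  rw [← Nat.cast_sub (Nat.lt_succ_iff.1 (mem_range.1 hk))]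
  norm_cast

end Gcdb

theorem IsPrimitiveRoot.sum_range_pow_pow {R : Type*} [CommRing R] [IsDomain R] {ζ : R} {m : ℕ}
    (hζ : IsPrimitiveRoot ζ m) (t : ℕ) :
    ∑ j ∈ range m, (ζ ^ j) ^ t = if m ∣ t then (m : R) else 0 := by
  simp_rw [← pow_mul, mul_comm _ t, pow_mul]
  split_ifs with h
  · simp [(hζ.pow_eq_one_iff_dvd t).2 h]
  · have hζt : ζ ^ t - 1 ≠ 0 := sub_ne_zero.2 (mt (hζ.pow_eq_one_iff_dvd t).1 h)
    have := mul_geom_sum (ζ ^ t) m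
    rw [pow_right_comm, hζ.pow_eq_one, one_pow, sub_self] at this
    exact (mul_eq_zero.1 this).resolve_left hζt

theorem IsPrimitiveRoot.sum_range_add_mul_pow_pow {R : Type*} [CommRing R] [IsDomain R] {ζ : R}
    {m : ℕ} (hζ : IsPrimitiveRoot ζ m) (x y : R) (n : ℕ) :
    ∑ j ∈ range m, (x + y * ζ ^ j) ^ n =
      m * ∑ k ∈ range (n + 1) with m ∣ n - k, (n.choose k : R) * x ^ k * y ^ (n - k) := by
  simp_rw [add_pow, mul_pow, sum_filter, mul_sum]
  rw [sum_comm]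
  refine sum_congr rfl fun k _ => ?_
  have := hζ.sum_range_pow_pow (n - k)
  calc ∑ j ∈ range m, x ^ k * (y ^ (n - k) * (ζ ^ j) ^ (n - k)) * (n.choose k : R)
      = (n.choose k : R) * x ^ k * y ^ (n - k) * ∑ j ∈ range m, (ζ ^ j) ^ (n - k) := by
        rw [mul_sum]; exact sum_congr rfl fun j _ => by ring
    _ = _ := by rw [this]; split_ifs <;> ring

namespace Complex

theorem norm_add_mul_exp_mul_I_sq (x y θ : ℝ) :
    ‖(x : ℂ) + y * exp (θ * I)‖ ^ 2 = (x + y) ^ 2 - 2 * x * y * (1 - Real.cos θ) := by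
  rw [exp_mul_I, ← ofReal_cos, ← ofReal_sin, Complex.sq_norm,
    show (x : ℂ) + y * (Real.cos θ + Real.sin θ * I)
      = ((x + y * Real.cos θ : ℝ) : ℂ) + ((y * Real.sin θ : ℝ) : ℂ) * I by push_cast; ring,
    normSq_add_mul_I]
  linear_combination y ^ 2 * Real.sin_sq_add_cos_sq θ

end Complex

theorem le_one_sub_cos_two_pi_mul_div {j m : ℕ} (hj : j ≤ m) :
    8 * ((min j (m - j) : ℕ) / m : ℝ) ^ 2 ≤ 1 - Real.cos (2 * π * j / m) := by
  rcases Nat.eq_zero_or_pos m with rfl | hm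
  · simp
  set u := min j (m - j)
  have hcos : Real.cos (2 * π * j / m) = Real.cos (2 * π * u / m) := by
    rcases min_choice j (m - j) with h | h <;> rw [show u = _ from h]
    rw [Nat.cast_sub hj, ← Real.cos_two_pi_sub]
    congr 1
    field_simp
  have hu : 2 * (u : ℝ) ≤ m := by exact_mod_cast (show 2 * u ≤ m by omega)
  have hθ : |2 * π * u / m| ≤ π := by
    rw [abs_of_nonneg (by positivity), div_le_iff₀ (by positivity)]
    nlinarith [pi_pos]
  have := Real.cos_le_one_sub_mul_cos_sq hθ
  rw [hcos]
  convert sub_le_sub_left this 1 using 1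
  field_simp
  ring

theorem sum_Ico_exp_neg_mul_sq_le {a : ℝ} (ha : 0 < a) (m : ℕ) :
    ∑ j ∈ Ico 1 m, Real.exp (-a * j ^ 2) ≤ √(π / a) / 2 := by
  set f : ℝ → ℝ := fun x => Real.exp (-a * x ^ 2)
  have hanti : AntitoneOn f (Set.Ici 0) := fun x hx y _ hxy => by
    simp only [f, Real.exp_le_exp, neg_mul, neg_le_neg_iff]
    exact mul_le_mul_of_nonneg_left (pow_le_pow_left₀ hx hxy 2) ha.le
  have hint : MeasureTheory.IntegrableOn f (Set.Ioi 0) := integrableOn_Ioi_exp_neg_mul_sq_iff.2 ha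
  have hpos : ∀ t ∈ Set.Ioi (0 : ℝ), 0 ≤ f t := fun t _ => (Real.exp_pos _).le
  have hsum : Summable fun n : ℕ => f (n + 1 : ℕ) :=
    (summable_nat_add_iff 1).2 (hanti.summable_of_integrableOn_Ioi_zero hint hpos)
  calc ∑ j ∈ Ico 1 m, f j = ∑ i ∈ range (m - 1), f (i + 1 : ℕ) := by
        rw [sum_Ico_eq_sum_range]; simp_rw [add_comm 1]
    _ ≤ ∑' i : ℕ, f (i + 1 : ℕ) := hsum.sum_le_tsum _ fun i _ => (Real.exp_pos _).le
    _ ≤ ∫ x in Set.Ioi 0, f x := hanti.tsum_add_one_le_integral hint hpos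
    _ = √(π / a) / 2 := integral_gaussian_Ioi a

theorem norm_add_mul_exp_pow_pow_le {α : ℝ} (hα0 : 0 ≤ α) (hα1 : α ≤ 1) {j m : ℕ} (hj : j ≤ m)
    (n : ℕ) :
    ‖(α : ℂ) + ((1 - α : ℝ) : ℂ) * Complex.exp (2 * π * Complex.I / m) ^ j‖ ^ n ≤
      Real.exp (-(8 * α * (1 - α) * n) * ((min j (m - j) : ℕ) / m : ℝ) ^ 2) := by
  set c := α * (1 - α)
  set v : ℝ := ((min j (m - j) : ℕ) / m : ℝ) ^ 2
  have hc : 0 ≤ c := mul_nonneg hα0 (sub_nonneg.2 hα1)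
  have hζj : Complex.exp (2 * π * Complex.I / m) ^ j
      = Complex.exp ((2 * π * j / m : ℝ) * Complex.I) := by
    rw [← Complex.exp_nat_mul]; push_cast; ring_nf
  have hsq : ‖(α : ℂ) + ((1 - α : ℝ) : ℂ) * Complex.exp (2 * π * Complex.I / m) ^ j‖ ^ 2
      ≤ Real.exp (-(16 * c) * v) := by
    rw [hζj, Complex.norm_add_mul_exp_mul_I_sq]
    have := le_one_sub_cos_two_pi_mul_div hj
    nlinarith [Real.add_one_le_exp (-(16 * c) * v)]
  rw [← pow_le_pow_iff_left₀ (by positivity) (Real.exp_nonneg _) two_ne_zero]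
  calc _ = (‖(α : ℂ) + ((1 - α : ℝ) : ℂ) * Complex.exp (2 * π * Complex.I / m) ^ j‖ ^ 2) ^ n := by
        ring
    _ ≤ Real.exp (-(16 * c) * v) ^ n := pow_le_pow_left₀ (by positivity) hsq n
    _ = _ := by rw [← Real.exp_nat_mul, sq, ← Real.exp_add]; congr 1; simp only [c]; ring

theorem sum_Ico_norm_add_mul_exp_pow_pow_le {α : ℝ} (hα0 : 0 < α) (hα1 : α < 1) {n : ℕ}
    (hn : 0 < n) (m : ℕ) :
    ∑ j ∈ Ico 1 m, ‖(α : ℂ) + ((1 - α : ℝ) : ℂ) * Complex.exp (2 * π * Complex.I / m) ^ j‖ ^ n ≤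
      m * √(π / (8 * α * (1 - α) * n)) := by
  rcases Nat.eq_zero_or_pos m with rfl | hm
  · simp
  set c := 8 * α * (1 - α) * n
  have hc : 0 < c := by have : 0 < 1 - α := sub_pos.2 hα1; positivity
  set a := c / m ^ 2
  set g : ℕ → ℝ := fun u => Real.exp (-a * u ^ 2)
  have hterm : ∀ j ∈ Ico 1 m,
      ‖(α : ℂ) + ((1 - α : ℝ) : ℂ) * Complex.exp (2 * π * Complex.I / m) ^ j‖ ^ n
        ≤ g j + g (m - j) := fun j hj => by
    refine (norm_add_mul_exp_pow_pow_le hα0.le hα1.le (mem_Ico.1 hj).2.le n).trans ?_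
    have hg : Real.exp (-c * ((min j (m - j) : ℕ) / m : ℝ) ^ 2) = g (min j (m - j)) := by
      simp only [g, a]; congr 1; field_simp
    rw [hg]
    rcases min_choice j (m - j) with h | h <;> rw [h]
    · exact le_add_of_nonneg_right (Real.exp_nonneg _)
    · exact le_add_of_nonneg_left (Real.exp_nonneg _)
  have hreflect : ∑ j ∈ Ico 1 m, g (m - j) = ∑ j ∈ Ico 1 m, g j := by
    rw [sum_Ico_reflect g 1 (Nat.le_succ m), Nat.add_sub_cancel_left, Nat.add_sub_cancel]
  have hsqrt : √(π / a) = m * √(π / c) := by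
    rw [show π / a = π / c * m ^ 2 by simp only [a]; field_simp, Real.sqrt_mul' _ (sq_nonneg _),
      Real.sqrt_sq (Nat.cast_nonneg m), mul_comm]
  calc _ ≤ ∑ j ∈ Ico 1 m, (g j + g (m - j)) := sum_le_sum hterm
    _ = 2 * ∑ j ∈ Ico 1 m, g j := by rw [sum_add_distrib, hreflect, two_mul]
    _ ≤ 2 * (√(π / a) / 2) := by gcongr; exact sum_Ico_exp_neg_mul_sq_le (by positivity) m
    _ = m * √(π / c) := by rw [← hsqrt]; ring

theorem abs_sum_filter_dvd_binomial_sub_inv_le {α : ℝ} (hα0 : 0 < α) (hα1 : α < 1) {n m : ℕ}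
    (hn : 0 < n) (hm : 0 < m) :
    |∑ k ∈ range (n + 1) with m ∣ n - k, (n.choose k : ℝ) * α ^ k * (1 - α) ^ (n - k) - 1 / m|
      ≤ √(π / (8 * α * (1 - α))) / √n := by
  set T := ∑ k ∈ range (n + 1) with m ∣ n - k, (n.choose k : ℝ) * α ^ k * (1 - α) ^ (n - k)
  set ζ := Complex.exp (2 * π * Complex.I / m)
  have hmR : (0 : ℝ) < m := Nat.cast_pos.2 hm
  have hid : (m : ℂ) * ((T : ℂ) - 1 / m)
      = ∑ j ∈ Ico 1 m, ((α : ℂ) + ((1 - α : ℝ) : ℂ) * ζ ^ j) ^ n := by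
    have := (Complex.isPrimitiveRoot_exp m hm.ne').sum_range_add_mul_pow_pow
      (α : ℂ) ((1 - α : ℝ) : ℂ) n
    rw [range_eq_Ico, sum_eq_sum_Ico_succ_bot hm] at this
    simp only [T]
    push_cast at this ⊢
    rw [mul_sub, mul_one_div_cancel (Nat.cast_ne_zero.2 hm.ne'), ← this]
    simp [ζ]
  calc |T - 1 / m| = ‖(m : ℂ) * ((T : ℂ) - 1 / m)‖ / m := by
        rw [norm_mul, Complex.norm_natCast, mul_div_cancel_left₀ _ hmR.ne',
          ← Complex.ofReal_natCast, ← Complex.ofReal_one, ← Complex.ofReal_div,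
          ← Complex.ofReal_sub, Complex.norm_real, Real.norm_eq_abs]
    _ ≤ (∑ j ∈ Ico 1 m, ‖(α : ℂ) + ((1 - α : ℝ) : ℂ) * ζ ^ j‖ ^ n) / m := by
        rw [hid]; gcongr; exact (norm_sum_le _ _).trans_eq (by simp_rw [norm_pow])
    _ ≤ m * √(π / (8 * α * (1 - α) * n)) / m := by
        gcongr; exact sum_Ico_norm_add_mul_exp_pow_pow_le hα0 hα1 hn m
    _ = √(π / (8 * α * (1 - α))) / √n := by
        rw [mul_div_cancel_left₀ _ hmR.ne', ← div_div, Real.sqrt_div' _ (Nat.cast_nonneg n)]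

theorem add_one_le_one_add_inv_log_mul_pow {x : ℝ} (hx : 1 < x) (a : ℕ) :
    (a + 1 : ℝ) ≤ (1 + (Real.log x)⁻¹) * x ^ a := by
  have hL := Real.log_pos hx
  have hexp : 1 + a * Real.log x ≤ x ^ a := by
    rw [← Real.exp_log (by positivity : 0 < x), ← Real.exp_nat_mul, Real.exp_log (by positivity)]
    linarith [Real.add_one_le_exp (a * Real.log x)]
  calc (a + 1 : ℝ) ≤ (1 + (Real.log x)⁻¹) * (1 + a * Real.log x) := by
        rw [add_mul, one_mul, mul_add, mul_one, ← mul_assoc, mul_comm _ (a : ℝ), mul_assoc,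
          inv_mul_cancel₀ hL.ne']
        nlinarith [inv_pos.2 hL]
    _ ≤ (1 + (Real.log x)⁻¹) * x ^ a := by gcongr

/-- The primes `p ≥ 2 ^ (1 / ε)` contribute `(v + 1) / p ^ (ε v) ≤ 1` to `τ(n) / n ^ ε`, and each of
the finitely many smaller ones at most `1 + (ε log 2)⁻¹`. -/
theorem card_divisors_le_mul_rpow {ε : ℝ} (hε : 0 < ε) :
    ∃ C, ∀ n : ℕ, n ≠ 0 → (#n.divisors : ℝ) ≤ C * n ^ ε := by
  set M := 1 + (ε * Real.log 2)⁻¹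
  set N := ⌈(2 : ℝ) ^ (1 / ε)⌉₊
  have hM : 1 ≤ M := le_add_of_nonneg_right (by have := Real.log_pos one_lt_two; positivity)
  have hprime : ∀ p a : ℕ, p.Prime →
      (a + 1 : ℝ) ≤ (if p < N then M else 1) * ((p : ℝ) ^ ε) ^ a := by
    intro p a hp
    have hp1 : (1 : ℝ) < p := Nat.one_lt_cast.2 hp.one_lt
    split_ifs with hpN
    · refine (add_one_le_one_add_inv_log_mul_pow (Real.one_lt_rpow hp1 hε) a).trans ?_
      gcongr
      rw [Real.log_rpow (by positivity)]
      show _ ≤ 1 + _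
      gcongr
      exact_mod_cast hp.two_le
    · have h2 : (2 : ℝ) ≤ (p : ℝ) ^ ε := by
        calc (2 : ℝ) = ((2 : ℝ) ^ (1 / ε)) ^ ε := by
              rw [← Real.rpow_mul zero_le_two, one_div_mul_cancel hε.ne', Real.rpow_one]
          _ ≤ (p : ℝ) ^ ε := by
              gcongr
              exact (Nat.le_ceil _).trans (Nat.cast_le.2 (not_lt.1 hpN))
      calc (a + 1 : ℝ) ≤ 2 ^ a := by exact_mod_cast Nat.lt_two_pow_self
        _ ≤ 1 * ((p : ℝ) ^ ε) ^ a := by rw [one_mul]; gcongr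
  refine ⟨M ^ N, fun n hn => ?_⟩
  have hn_rpow : (n : ℝ) ^ ε = ∏ p ∈ n.primeFactors, ((p : ℝ) ^ ε) ^ n.factorization p := by
    conv_lhs => rw [← Nat.prod_factorization_pow_eq_self hn]
    rw [Finsupp.prod, Nat.support_factorization, Nat.cast_prod,
      ← Real.finsetProd_rpow _ _ fun p _ => by positivity]
    exact prod_congr rfl fun p _ => by rw [Nat.cast_pow, Real.rpow_pow_comm (Nat.cast_nonneg p)]
  have hsmall : ∏ p ∈ n.primeFactors, (if p < N then M else 1) ≤ M ^ N := by
    rw [prod_ite, prod_const, prod_const_one, mul_one]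
    refine pow_le_pow_right₀ hM ((card_le_card fun p hp => ?_).trans (card_range N).le)
    exact mem_range.2 (mem_filter.1 hp).2
  calc (#n.divisors : ℝ) = ∏ p ∈ n.primeFactors, (n.factorization p + 1 : ℝ) := by
        rw [Nat.card_divisors hn]; push_cast; rfl
    _ ≤ ∏ p ∈ n.primeFactors, ((if p < N then M else 1) * ((p : ℝ) ^ ε) ^ n.factorization p) :=
        prod_le_prod (fun _ _ => by positivity) fun p hp =>
          hprime p _ (Nat.prime_of_mem_primeFactors hp)
    _ ≤ M ^ N * n ^ ε := by
        rw [prod_mul_distrib, hn_rpow]; gcongr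

theorem stmt_19 (b1 b2 : ℕ) (hb1 : 1 ≤ b1) (hb : b1 ≤ b2)
    (α : ℝ) (hα0 : 0 < α) (hα1 : α < 1) (ε : ℝ) (hε : 0 < ε) :
    ∃ C > 0, ∀ n : ℕ, 1 < n →
      (∑ k ∈ (range (n + 1)).filter
            (fun k : ℕ => gcdb b1 b2 (k : ℤ) ((n : ℤ) - (k : ℤ)) = 1),
          (n.choose k : ℝ) * α ^ k * (1 - α) ^ (n - k))
        = (∑ k ∈ (range (n + 1)).filter
            (fun k : ℕ => gcdb b1 b2 (n : ℤ) ((n : ℤ) - (k : ℤ)) = 1),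
          (n.choose k : ℝ) * α ^ k * (1 - α) ^ (n - k)) ∧
      |(∑ k ∈ (range (n + 1)).filter
            (fun k : ℕ => gcdb b1 b2 (n : ℤ) ((n : ℤ) - (k : ℤ)) = 1),
          (n.choose k : ℝ) * α ^ k * (1 - α) ^ (n - k)) - (fb b1 b2 n : ℝ)|
        ≤ C * (n : ℝ) ^ (-(1 : ℝ) / 2 + ε) := by
  obtain ⟨C, hC⟩ := card_divisors_le_mul_rpow hε
  have hC1 : 1 ≤ C := by simpa using hC 1 one_ne_zero
  set K := √(π / (8 * α * (1 - α)))
  have hK : 0 < K := Real.sqrt_pos.2 (by have := sub_pos.2 hα1; positivity)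
  refine ⟨C * K, by positivity, fun n hn => ⟨?_, ?_⟩⟩
  · refine sum_congr (filter_congr fun k _ => ?_) fun _ _ => rfl
    rw [← gcdb_add_self_left hb, add_sub_cancel]
  have hnR : (0 : ℝ) < n := by positivity
  have hterm : ∀ d ∈ n.divisors, |(μ d : ℝ) * ∑ k ∈ range (n + 1) with d ^ b2 ∣ n - k,
      (n.choose k : ℝ) * α ^ k * (1 - α) ^ (n - k) - (μ d : ℝ) / (d : ℝ) ^ b2| ≤ K / √n := by
    intro d hd
    rw [div_eq_mul_one_div, ← mul_sub, abs_mul, ← Nat.cast_pow]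
    exact (mul_le_of_le_one_left (abs_nonneg _) (mod_cast abs_moebius_le_one)).trans
      (abs_sum_filter_dvd_binomial_sub_inv_le hα0 hα1 (by omega)
        (pow_pos (Nat.pos_of_mem_divisors hd) b2))
  rw [sum_range_filter_gcdb_sub_eq_one (by omega) (by omega), fb]
  push_cast
  rw [← sum_sub_distrib]
  calc _ ≤ ∑ d ∈ n.divisors with d ^ b1 ∣ n, K / √n :=
        (abs_sum_le_sum_abs _ _).trans (sum_le_sum fun d hd => hterm d (mem_filter.1 hd).1)
    _ ≤ #n.divisors * (K / √n) := by
        rw [sum_const, nsmul_eq_mul]; gcongr; exact filter_subset _ _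
    _ ≤ C * n ^ ε * (K / √n) := by gcongr; exact hC n (by omega)
    _ = C * K * n ^ (-(1 : ℝ) / 2 + ε) := by
        rw [Real.rpow_add hnR, Real.sqrt_eq_rpow, neg_div, Real.rpow_neg hnR.le]; ring
end
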